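/- arXiv:2411.18550 — 8 statements merged into one kernel-verified Lean document; each statement's English description precedes it below -/
import Mathlib

section
/- The function g(z) := ∫_E log(z − x) ρ(x) dx is complex analytic (holomorphic) on ℂ \ (−∞, √2]. Moreover, if ∫_E ρ(x) dx = 1, then for every integer n the function z ↦ exp(n·g(z)) extends to a holomorphic function on ℂ \ E. -/
/-!
Holomorphy of `g` is differentiation under the integral sign: on compact subsets of
`(ℂ \ (-∞, √2]) × E` the integrand and its `z`-derivative are continuous, hence bounded.

For the extension, `log (z - x) = log (1 - x / z) + log z` for `z ∉ (-∞, √2]` and `x ∈ E`: the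
difference of the two sides lies in `2πiℤ`, is continuous in `x` on the interval `E`, and vanishes
at `x = 0`. When `∫ ρ = 1` this gives `exp (n g(z)) = zⁿ exp (n ∫ ρ(x) log (1 - x / z) dx)`, and the
right-hand side is holomorphic on all of `ℂ \ E`, since `1 - x / z` stays off `(-∞, 0]` there.
-/

open MeasureTheory Set

/-- The spectral interval `E = [-√2, √2]`. -/
noncomputable def E : Set ℝ := Icc (-Real.sqrt 2) (Real.sqrt 2)

/-- The slit `(-∞, √2]`, viewed as a subset of `ℂ`. -/
noncomputable def slit : Set ℂ := {z : ℂ | z.im = 0 ∧ z.re ≤ Real.sqrt 2}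

/-- The interval `E = [-√2, √2]`, viewed as a subset of `ℂ`. -/
noncomputable def Ecx : Set ℂ :=
  {z : ℂ | z.im = 0 ∧ -Real.sqrt 2 ≤ z.re ∧ z.re ≤ Real.sqrt 2}

/-- The g-function `g(z) = ∫_E log(z - x) ρ(x) dx`, with the principal branch
of the complex logarithm. -/
noncomputable def gfun (ρ : ℝ → ℝ) (z : ℂ) : ℂ :=
  ∫ x in E, (ρ x : ℂ) * Complex.log (z - (x : ℂ))

open Complex Function

theorem differentiableOn_setIntegral_of_hasDerivAt
    {α : Type*} [TopologicalSpace α] [T2Space α] [MeasurableSpace α] [OpensMeasurableSpace α]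
    {μ : Measure α} [IsFiniteMeasureOnCompacts μ] {𝕜 : Type*} [RCLike 𝕜]
    {V : Type*} [NormedAddCommGroup V] [NormedSpace ℝ V] [NormedSpace 𝕜 V]
    [SecondCountableTopologyEither α V]
    {K : Set α} (hK : IsCompact K) {U : Set 𝕜} (hU : IsOpen U) {f f' : 𝕜 → α → V}
    (hf : ∀ z ∈ U, ContinuousOn (f z) K) (hf' : ContinuousOn (uncurry f') (U ×ˢ K))
    (hderiv : ∀ z ∈ U, ∀ x ∈ K, HasDerivAt (f · x) (f' z x) z) :
    DifferentiableOn 𝕜 (fun z => ∫ x in K, f z x ∂μ) U := by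
  intro z₀ hz₀
  obtain ⟨r, hr, hball⟩ := Metric.isOpen_iff.mp hU z₀ hz₀
  have hclosedBall : Metric.closedBall z₀ (r / 2) ⊆ U :=
    (Metric.closedBall_subset_ball (by linarith)).trans hball
  obtain ⟨C, hC⟩ := ((isCompact_closedBall z₀ (r / 2)).prod hK).exists_bound_of_continuousOn
    (hf'.mono (prod_mono hclosedBall subset_rfl))
  have hf'₀ : ContinuousOn (f' z₀) K :=
    hf'.comp (Continuous.continuousOn (Continuous.prodMk_right z₀)) fun _ hx => ⟨hz₀, hx⟩
  have hmem : ∀ᵐ x ∂μ.restrict K, x ∈ K := ae_restrict_mem hK.measurableSet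
  refine (hasDerivAt_integral_of_dominated_loc_of_deriv_le (bound := fun _ => C)
    (Metric.ball_mem_nhds z₀ (half_pos hr))
    (Filter.eventually_of_mem (hU.mem_nhds hz₀) fun z hz =>
      (hf z hz).aestronglyMeasurable hK.measurableSet)
    ((hf z₀ hz₀).integrableOn_compact hK) (hf'₀.aestronglyMeasurable hK.measurableSet)
    (hmem.mono fun x hx z hz => hC (z, x) ⟨Metric.ball_subset_closedBall hz, hx⟩)
    (continuousOn_const.integrableOn_compact hK)
    (hmem.mono fun x hx z hz =>
      hderiv z (hclosedBall (Metric.ball_subset_closedBall hz)) x hx)).2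
    |>.differentiableAt.differentiableWithinAt

theorem eqOn_zero_of_exp_eq_one {X : Type*} [TopologicalSpace X] {S : Set X}
    (hS : IsPreconnected S) {k : X → ℂ} (hk : ContinuousOn k S)
    (hexp : ∀ x ∈ S, exp (k x) = 1) {x₀ : X} (hx₀ : x₀ ∈ S) (hk₀ : k x₀ = 0) :
    EqOn k 0 S := by
  have hperiod : ∀ x ∈ S, ∃ n : ℤ, k x = n * (2 * Real.pi * I) := fun x hx =>
    exp_eq_one_iff.mp (hexp x hx)
  have him : MapsTo (fun x => (k x).im) S (AddSubgroup.zmultiples (2 * Real.pi)) := by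
    intro x hx
    obtain ⟨n, hn⟩ := hperiod x hx
    exact ⟨n, by simp [hn]⟩
  intro x hx
  obtain ⟨n, hn⟩ := hperiod x hx
  have him_eq : (k x).im = (k x₀).im :=
    hS.constant_of_mapsTo (inferInstance : DiscreteTopology (AddSubgroup.zmultiples _)).isDiscrete
      (continuous_im.comp_continuousOn hk) him hx hx₀
  have hn0 : n = 0 := by
    simp only [hk₀, zero_im, hn, mul_im, ofReal_im] at him_eq
    simpa [Real.pi_ne_zero] using him_eq
  simp [hn, hn0]

theorem isClosed_slit : IsClosed slit :=
  (isClosed_eq continuous_im continuous_const).inter (isClosed_le continuous_re continuous_const)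

theorem isClosed_Ecx : IsClosed Ecx :=
  (isClosed_eq continuous_im continuous_const).inter <|
    (isClosed_le continuous_const continuous_re).inter (isClosed_le continuous_re continuous_const)

theorem notMem_Ecx_of_notMem_slit {z : ℂ} (hz : z ∉ slit) : z ∉ Ecx :=
  fun h => hz ⟨h.1, h.2.2⟩

theorem zero_mem_E : (0 : ℝ) ∈ E := ⟨neg_nonpos.mpr (Real.sqrt_nonneg 2), Real.sqrt_nonneg 2⟩

theorem ofReal_mem_Ecx {x : ℝ} (hx : x ∈ E) : (x : ℂ) ∈ Ecx := ⟨ofReal_im x, hx.1, hx.2⟩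

theorem ne_zero_of_notMem_Ecx {z : ℂ} (hz : z ∉ Ecx) : z ≠ 0 := by
  rintro rfl
  exact hz (ofReal_zero ▸ ofReal_mem_Ecx zero_mem_E)

theorem sub_ofReal_mem_slitPlane {z : ℂ} {x : ℝ} (hz : z ∉ slit) (hx : x ≤ √2) :
    z - x ∈ slitPlane := by
  rw [mem_slitPlane_iff, sub_re, ofReal_re, sub_im, ofReal_im, sub_zero]
  by_cases him : z.im = 0
  · exact Or.inl (by linarith [not_le.mp fun h => hz ⟨him, h⟩])
  · exact Or.inr him

open scoped ComplexOrder in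
theorem one_sub_ofReal_div_mem_slitPlane {z : ℂ} {x : ℝ} (hz : z ∉ Ecx) (hx : x ∈ E) :
    1 - x / z ∈ slitPlane := by
  rw [mem_slitPlane_iff_not_le_zero]
  intro hle
  obtain ⟨hre, him⟩ := Complex.le_def.mp (sub_nonpos.mp hle)
  set t := ((x : ℂ) / z).re
  have ht : (x : ℂ) / z = t := Complex.ext rfl (by simpa using him.symm)
  have ht1 : 1 ≤ t := by simpa using hre
  have hz0 := ne_zero_of_notMem_Ecx hz
  -- `z = t⁻¹ x` lies on the segment from `0` to `x`
  have hzt : z = ((t⁻¹ • x : ℝ) : ℂ) := by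
    rw [div_eq_iff hz0] at ht
    rw [smul_eq_mul, ofReal_mul, ofReal_inv, ht]
    field_simp [show (t : ℂ) ≠ 0 by exact_mod_cast (by linarith : t ≠ 0)]
  exact hz (hzt ▸ ofReal_mem_Ecx ((convex_Icc _ _).smul_mem_of_zero_mem zero_mem_E hx
    ⟨by positivity, inv_le_one_of_one_le₀ ht1⟩))

theorem continuousOn_log_sub_ofReal {z : ℂ} (hz : z ∉ slit) :
    ContinuousOn (fun x : ℝ => log (z - x)) E := fun x hx =>
  (ContinuousAt.clog (f := fun y : ℝ => z - y) (by fun_prop)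
    (sub_ofReal_mem_slitPlane hz hx.2)).continuousWithinAt

theorem continuousOn_log_one_sub_ofReal_div {z : ℂ} (hz : z ∉ Ecx) :
    ContinuousOn (fun x : ℝ => log (1 - x / z)) E := fun x hx =>
  (ContinuousAt.clog (f := fun y : ℝ => 1 - y / z) (by fun_prop)
    (one_sub_ofReal_div_mem_slitPlane hz hx)).continuousWithinAt

-- The defect `log (z - y) - log (1 - y / z) - log z` lies in `2πiℤ`, depends continuously on
-- `y ∈ E` and vanishes at `y = 0`.
theorem log_sub_ofReal_eq {z : ℂ} {x : ℝ} (hz : z ∉ slit) (hx : x ∈ E) :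
    log (z - x) = log (1 - x / z) + log z := by
  have hzE := notMem_Ecx_of_notMem_slit hz
  have hz0 := ne_zero_of_notMem_Ecx hzE
  have hdefect : EqOn (fun y : ℝ => log (z - y) - log (1 - y / z) - log z) 0 E := by
    refine eqOn_zero_of_exp_eq_one isPreconnected_Icc
      (((continuousOn_log_sub_ofReal hz).sub (continuousOn_log_one_sub_ofReal_div hzE)).sub
        continuousOn_const) (fun y hy => ?_) zero_mem_E (by simp)
    have h1 := slitPlane_ne_zero (sub_ofReal_mem_slitPlane hz hy.2)
    have h2 := slitPlane_ne_zero (one_sub_ofReal_div_mem_slitPlane hzE hy)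
    rw [exp_sub, exp_sub, exp_log h1, exp_log h2, exp_log hz0]
    field_simp
  have := hdefect hx
  simp only [Pi.zero_apply] at this
  linear_combination this

noncomputable def gfunReduced (ρ : ℝ → ℝ) (z : ℂ) : ℂ :=
  ∫ x in E, (ρ x : ℂ) * log (1 - x / z)

theorem gfun_eq_gfunReduced_add_log {ρ : ℝ → ℝ} (hρ : Continuous ρ) (hρ1 : ∫ x in E, ρ x = 1)
    {z : ℂ} (hz : z ∉ slit) : gfun ρ z = gfunReduced ρ z + log z := by
  have hint : IntegrableOn (fun x : ℝ => (ρ x : ℂ) * log (1 - x / z)) E :=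
    ((continuous_ofReal.comp hρ).continuousOn.mul
      (continuousOn_log_one_sub_ofReal_div (notMem_Ecx_of_notMem_slit hz))).integrableOn_compact
      isCompact_Icc
  have hint_log : IntegrableOn (fun x : ℝ => (ρ x : ℂ) * log z) E :=
    (by fun_prop : Continuous fun x : ℝ => (ρ x : ℂ) * log z).continuousOn.integrableOn_compact
      isCompact_Icc
  calc gfun ρ z = ∫ x in E, ((ρ x : ℂ) * log (1 - x / z) + (ρ x : ℂ) * log z) :=
        setIntegral_congr_fun measurableSet_Icc fun x hx => by
          simp only [log_sub_ofReal_eq hz hx, mul_add]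
    _ = gfunReduced ρ z + log z := by
        rw [integral_add hint hint_log, integral_mul_const, integral_complex_ofReal, hρ1,
          ofReal_one, one_mul, gfunReduced]

theorem differentiableOn_gfun {ρ : ℝ → ℝ} (hρ : Continuous ρ) :
    DifferentiableOn ℂ (gfun ρ) slitᶜ := by
  refine differentiableOn_setIntegral_of_hasDerivAt isCompact_Icc isClosed_slit.isOpen_compl
    (f' := fun z x => (ρ x : ℂ) * (1 / (z - x))) (fun z hz => ?_) (fun p hp => ?_)
    fun z hz x hx => ?_
  · exact (continuous_ofReal.comp hρ).continuousOn.mul (continuousOn_log_sub_ofReal hz)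
  · have hne := slitPlane_ne_zero (sub_ofReal_mem_slitPlane hp.1 hp.2.2)
    exact ContinuousAt.continuousWithinAt (by fun_prop (disch := exact hne))
  · exact (((hasDerivAt_id z).sub_const (x : ℂ)).clog
      (sub_ofReal_mem_slitPlane hz hx.2)).const_mul _

theorem hasDerivAt_log_one_sub_div {x z : ℂ} (hz : z ≠ 0) (hmem : 1 - x / z ∈ slitPlane) :
    HasDerivAt (fun w => log (1 - x / w)) (x / (z * (z - x))) z := by
  have hzx : z - x ≠ 0 := by
    intro h
    rw [← sub_eq_zero.mp h, div_self hz, sub_self] at hmem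
    exact slitPlane_ne_zero hmem rfl
  convert (((hasDerivAt_id z).inv hz).const_mul x |>.const_sub 1).clog hmem using 1
  · simp [div_eq_mul_inv]
  · simp only [id, Pi.inv_apply]
    field_simp

theorem differentiableOn_gfunReduced {ρ : ℝ → ℝ} (hρ : Continuous ρ) :
    DifferentiableOn ℂ (gfunReduced ρ) Ecxᶜ := by
  refine differentiableOn_setIntegral_of_hasDerivAt isCompact_Icc isClosed_Ecx.isOpen_compl
    (f' := fun z x => (ρ x : ℂ) * (x / (z * (z - x)))) (fun z hz => ?_) (fun p hp => ?_)
    fun z hz x hx => ?_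
  · exact (continuous_ofReal.comp hρ).continuousOn.mul (continuousOn_log_one_sub_ofReal_div hz)
  · have hne : p.1 * (p.1 - p.2) ≠ 0 := mul_ne_zero (ne_zero_of_notMem_Ecx hp.1)
      fun h => hp.1 (sub_eq_zero.mp h ▸ ofReal_mem_Ecx hp.2)
    exact ContinuousAt.continuousWithinAt (by fun_prop (disch := exact hne))
  · exact (hasDerivAt_log_one_sub_div (ne_zero_of_notMem_Ecx hz)
      (one_sub_ofReal_div_mem_slitPlane hz hx)).const_mul _

theorem gfun_holomorphic_and_exp_extends_general (ρ : ℝ → ℝ) (hcont : Continuous ρ) :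
    DifferentiableOn ℂ (gfun ρ) slitᶜ ∧
    ((∫ x in E, ρ x) = 1 →
      ∀ n : ℤ, ∃ G : ℂ → ℂ, DifferentiableOn ℂ G Ecxᶜ ∧
        ∀ z ∈ slitᶜ, G z = Complex.exp ((n : ℂ) * gfun ρ z)) := by
  refine ⟨differentiableOn_gfun hcont, fun hρ1 n =>
    ⟨fun z => z ^ n * exp (n * gfunReduced ρ z), ?_, fun z hz => ?_⟩⟩
  · have hzpow : DifferentiableOn ℂ (fun z : ℂ => z ^ n) Ecxᶜ := fun z hz =>
      (differentiableAt_zpow.mpr (Or.inl (ne_zero_of_notMem_Ecx hz))).differentiableWithinAt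
    exact hzpow.mul ((differentiableOn_gfunReduced hcont).const_mul _).cexp
  · have hz0 := ne_zero_of_notMem_Ecx (notMem_Ecx_of_notMem_slit hz)
    rw [gfun_eq_gfunReduced_add_log hcont hρ1 hz, mul_add, exp_add, exp_int_mul (log z),
      exp_log hz0, mul_comm]

/-- The g-function is holomorphic on `ℂ \ (-∞, √2]`, and if `∫_E ρ = 1` then for every
integer `n` the function `exp(n g)` extends holomorphically to `ℂ \ E`. -/
theorem gfun_holomorphic_and_exp_extends (ρ : ℝ → ℝ) (hcont : Continuous ρ)
    (hnonneg : ∀ x, 0 ≤ ρ x) (hsupp : ∀ x, x ∉ E → ρ x = 0) :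
    DifferentiableOn ℂ (gfun ρ) slitᶜ ∧
    ((∫ x in E, ρ x) = 1 →
      ∀ n : ℤ, ∃ G : ℂ → ℂ, DifferentiableOn ℂ G Ecxᶜ ∧
        ∀ z ∈ slitᶜ, G z = Complex.exp ((n : ℂ) * gfun ρ z)) :=
  gfun_holomorphic_and_exp_extends_general ρ hcont
end

section
/- The function g(z) := ∫_E log(z − x) ρ(x) dx admits one-sided boundary values on the real line: for every real z with z ≠ ±√2, the limits g_±(z) := lim_{ε↓0} g(z ± iε) exist, and (i) if z < −√2 then g_±(z) = ∫_E ln|z − x| ρ(x) dx ± iπ·∫_E ρ(x) dx; (ii) if z ∈ (−√2, √2) then g_±(z) = ∫_E ln|z − x| ρ(x) dx ± iπ·∫_z^{√2} ρ(x) dx; (iii) if z > √2 then g_±(z) = ∫_E ln|z − x| ρ(x) dx. -/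
/-!
For real `c ≠ 0` the principal logarithm `log (c + iε)` tends to `log c` as `ε ↓ 0`, and
`log c` has imaginary part `π` for `c < 0` and `0` for `c > 0`. For `0 < ε ≤ 1` the integrand
`ρ x log (z + iε - x)` is dominated by a multiple of `|log |z - x|| + |z - x| + π`, which is
integrable on `E`, so by dominated convergence
`g (z + i0) = g z = ∫_E ln |z - x| ρ x dx + iπ ∫_{E ∩ (z, ∞)} ρ x dx`.
Since `g (conj w) = conj (g w)` off the real axis, `g (z - i0)` is the conjugate value.
-/

open MeasureTheory Set Filter Topology

open Complex ComplexConjugate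
open scoped Real

theorem Real.abs_log_le_of_le_of_le_add_one {a t : ℝ} (ha : 0 < a) (hat : a ≤ t)
    (hta : t ≤ a + 1) :
    |Real.log t| ≤ |Real.log a| + a := by
  have hlow : Real.log a ≤ Real.log t := Real.log_le_log ha hat
  have hup : Real.log t ≤ t - 1 := Real.log_le_sub_one_of_pos (ha.trans_le hat)
  rw [abs_le]
  constructor <;> linarith [neg_abs_le (Real.log a), le_abs_self (Real.log a)]

theorem Complex.norm_log_le_of_abs_im_le_one {w : ℂ} (hre : w.re ≠ 0) (him : |w.im| ≤ 1) :
    ‖log w‖ ≤ |Real.log (|w.re|)| + |w.re| + π := by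
  have hnorm : |Real.log ‖w‖| ≤ |Real.log (|w.re|)| + |w.re| :=
    Real.abs_log_le_of_le_of_le_add_one (abs_pos.2 hre) (abs_re_le_norm w)
      ((norm_le_abs_re_add_abs_im w).trans (by linarith))
  calc ‖log w‖ ≤ |(log w).re| + |(log w).im| := norm_le_abs_re_add_abs_im _
    _ ≤ |Real.log (|w.re|)| + |w.re| + π := by
      rw [log_re, log_im]; linarith [abs_arg_le_pi w]

theorem Complex.tendsto_log_ofReal_add_mul_I {c : ℝ} (hc : c ≠ 0) :
    Tendsto (fun ε : ℝ => log (c + ε * I)) (𝓝[>] 0) (𝓝 (log c)) := by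
  have hpath :
      Tendsto (fun ε : ℝ => (c : ℂ) + ε * I) (𝓝[>] 0) (𝓝[{w | 0 ≤ w.im}] (c : ℂ)) := by
    refine tendsto_nhdsWithin_iff.2 ⟨?_, ?_⟩
    · exact tendsto_nhdsWithin_of_tendsto_nhds
        (Continuous.tendsto' (by fun_prop) 0 _ (by simp))
    · filter_upwards [self_mem_nhdsWithin] with ε hε
      simpa using le_of_lt hε
  have hlog : ContinuousWithinAt log {w | 0 ≤ w.im} c := by
    rcases hc.lt_or_gt with hneg | hpos
    · exact continuousWithinAt_log_of_re_neg_of_im_zero (by simpa) (by simp)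
    · exact (continuousAt_clog (ofReal_mem_slitPlane.2 hpos)).continuousWithinAt
  exact hlog.tendsto.comp hpath

theorem integrableOn_log_abs_sub (z a b : ℝ) :
    IntegrableOn (fun x => Real.log |z - x|) (Icc a b) := by
  have h := (intervalIntegral.intervalIntegrable_log' (a := z - a) (b := z - b)).comp_sub_left z
  simp only [sub_sub_cancel] at h
  simpa [Real.log_abs] using ((intervalIntegrable_iff' (by simp)).1 h).mono_set Icc_subset_uIcc

theorem tendsto_setIntegral_mul_log_add_mul_I {ρ : ℝ → ℝ} {a b : ℝ}
    (hρ : ContinuousOn ρ (Icc a b)) (z : ℝ) :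
    Tendsto (fun ε : ℝ => ∫ x in Icc a b, (ρ x : ℂ) * log (z + ε * I - x)) (𝓝[>] 0)
      (𝓝 (∫ x in Icc a b, (ρ x : ℂ) * log (z - x))) := by
  obtain ⟨C, hC⟩ := isCompact_Icc.exists_bound_of_continuousOn hρ
  have hsub (ε x : ℝ) : (z : ℂ) + ε * I - x = ((z - x : ℝ) : ℂ) + ε * I := by
    push_cast; ring
  refine tendsto_integral_filter_of_dominated_convergence
    (fun x => C * (|Real.log (|z - x|)| + |z - x| + π)) ?_ ?_ ?_ ?_
  · filter_upwards [self_mem_nhdsWithin] with ε hε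
    refine ((continuous_ofReal.comp_continuousOn hρ).mul (ContinuousOn.clog (by fun_prop)
      fun x _ => mem_slitPlane_iff.2 (Or.inr ?_))).aestronglyMeasurable measurableSet_Icc
    simpa using hε.ne'
  · filter_upwards [Ioc_mem_nhdsGT zero_lt_one] with ε hε
    filter_upwards [ae_restrict_mem measurableSet_Icc, (volume.restrict (Icc a b)).ae_ne z]
      with x hx hxz
    rw [norm_mul, norm_real, hsub]
    refine mul_le_mul (hC x hx) ?_ (norm_nonneg _) ((norm_nonneg _).trans (hC x hx))
    simpa using norm_log_le_of_abs_im_le_one (w := ((z - x : ℝ) : ℂ) + ε * I)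
      (by simpa [sub_eq_zero] using hxz.symm) (by simpa [abs_of_pos hε.1] using hε.2)
  · refine Integrable.const_mul ?_ C
    exact ((integrableOn_log_abs_sub z a b).abs.add
      (Continuous.integrableOn_Icc (f := fun x => |z - x|) (by fun_prop))).add
      (integrableOn_const (by simp))
  · filter_upwards [(volume.restrict (Icc a b)).ae_ne z] with x hxz
    simpa only [hsub, ofReal_sub] using
      (tendsto_log_ofReal_add_mul_I (sub_ne_zero.2 hxz.symm)).const_mul (ρ x : ℂ)

theorem gfun_conj (ρ : ℝ → ℝ) {w : ℂ} (hw : w.im ≠ 0) : gfun ρ (conj w) = conj (gfun ρ w) := by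
  rw [gfun, gfun, ← integral_conj]
  congr 1
  funext x
  have harg : (w - x).arg ≠ π := fun h => hw (by simpa using (arg_eq_pi_iff.1 h).2)
  rw [show conj w - x = conj (w - x) by simp, log_conj _ harg, map_mul, conj_ofReal]

theorem ofReal_mul_log_ofReal_sub (ρ : ℝ → ℝ) (z x : ℝ) :
    (ρ x : ℂ) * log ((z : ℂ) - x) =
      ((Real.log |z - x| * ρ x : ℝ) : ℂ) + ((Ioi z).indicator ρ x : ℝ) * (π * I) := by
  rw [← ofReal_sub, log, norm_real, Real.norm_eq_abs]
  by_cases h : z < x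
  · rw [arg_ofReal_of_neg (sub_neg.2 h), indicator_of_mem (mem_Ioi.2 h)]
    push_cast; ring
  · rw [arg_ofReal_of_nonneg (sub_nonneg.2 (not_lt.1 h)), indicator_of_notMem (mt mem_Ioi.1 h)]
    push_cast; ring

theorem gfun_ofReal {ρ : ℝ → ℝ} (hρ : ContinuousOn ρ E) (z : ℝ) :
    gfun ρ z = ((∫ x in E, Real.log |z - x| * ρ x : ℝ) : ℂ)
      + π * ((∫ x in E ∩ Ioi z, ρ x : ℝ) : ℂ) * I := by
  have hlog : IntegrableOn (fun x => ((Real.log |z - x| * ρ x : ℝ) : ℂ)) E :=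
    ((integrableOn_log_abs_sub z _ _).mul_continuousOn hρ isCompact_Icc).ofReal
  have hind : IntegrableOn (fun x => (((Ioi z).indicator ρ x : ℝ) : ℂ) * (π * I)) E :=
    ((hρ.integrableOn_compact isCompact_Icc).indicator measurableSet_Ioi).ofReal.mul_const _
  simp only [gfun, ofReal_mul_log_ofReal_sub ρ z]
  rw [integral_add hlog hind, integral_mul_const, integral_complex_ofReal,
    integral_complex_ofReal, setIntegral_indicator measurableSet_Ioi]
  ring

theorem tendsto_gfun_ofReal_add_mul_I {ρ : ℝ → ℝ} (hρ : ContinuousOn ρ E) (z : ℝ) :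
    Tendsto (fun ε : ℝ => gfun ρ (z + ε * I)) (𝓝[>] 0) (𝓝 (gfun ρ z)) :=
  tendsto_setIntegral_mul_log_add_mul_I hρ z

theorem tendsto_gfun_ofReal_sub_mul_I {ρ : ℝ → ℝ} (hρ : ContinuousOn ρ E) (z : ℝ) :
    Tendsto (fun ε : ℝ => gfun ρ (z - ε * I)) (𝓝[>] 0) (𝓝 (conj (gfun ρ z))) := by
  refine ((continuous_conj.tendsto _).comp (tendsto_gfun_ofReal_add_mul_I hρ z)).congr' ?_
  filter_upwards [self_mem_nhdsWithin] with ε hε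
  have him : ((z : ℂ) + ε * I).im ≠ 0 := by simpa using hε.ne'
  rw [Function.comp_apply, ← gfun_conj ρ him]
  simp [sub_eq_add_neg]

theorem gfun_boundary_values_of_inter_Ioi {ρ : ℝ → ℝ} (hρ : ContinuousOn ρ E) (z : ℝ) :
    Tendsto (fun ε : ℝ => gfun ρ (z + ε * I)) (𝓝[>] 0)
        (𝓝 (((∫ x in E, Real.log |z - x| * ρ x : ℝ) : ℂ)
          + π * ((∫ x in E ∩ Ioi z, ρ x : ℝ) : ℂ) * I)) ∧
      Tendsto (fun ε : ℝ => gfun ρ (z - ε * I)) (𝓝[>] 0)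
        (𝓝 (((∫ x in E, Real.log |z - x| * ρ x : ℝ) : ℂ)
          - π * ((∫ x in E ∩ Ioi z, ρ x : ℝ) : ℂ) * I)) := by
  have hz := gfun_ofReal hρ z
  refine ⟨hz ▸ tendsto_gfun_ofReal_add_mul_I hρ z, ?_⟩
  convert tendsto_gfun_ofReal_sub_mul_I hρ z using 2
  rw [hz]
  simp [sub_eq_add_neg]

theorem gfun_boundary_values_general (ρ : ℝ → ℝ) (hcont : Continuous ρ) (z : ℝ) :
    (z < -Real.sqrt 2 →
      Tendsto (fun ε : ℝ => gfun ρ ((z : ℂ) + (ε : ℂ) * Complex.I)) (𝓝[>] 0)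
        (𝓝 (((∫ x in E, Real.log |z - x| * ρ x : ℝ) : ℂ)
          + (Real.pi : ℂ) * ((∫ x in E, ρ x : ℝ) : ℂ) * Complex.I)) ∧
      Tendsto (fun ε : ℝ => gfun ρ ((z : ℂ) - (ε : ℂ) * Complex.I)) (𝓝[>] 0)
        (𝓝 (((∫ x in E, Real.log |z - x| * ρ x : ℝ) : ℂ)
          - (Real.pi : ℂ) * ((∫ x in E, ρ x : ℝ) : ℂ) * Complex.I))) ∧
    (z ∈ Ioo (-Real.sqrt 2) (Real.sqrt 2) →
      Tendsto (fun ε : ℝ => gfun ρ ((z : ℂ) + (ε : ℂ) * Complex.I)) (𝓝[>] 0)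
        (𝓝 (((∫ x in E, Real.log |z - x| * ρ x : ℝ) : ℂ)
          + (Real.pi : ℂ) * ((∫ x in z..Real.sqrt 2, ρ x : ℝ) : ℂ) * Complex.I)) ∧
      Tendsto (fun ε : ℝ => gfun ρ ((z : ℂ) - (ε : ℂ) * Complex.I)) (𝓝[>] 0)
        (𝓝 (((∫ x in E, Real.log |z - x| * ρ x : ℝ) : ℂ)
          - (Real.pi : ℂ) * ((∫ x in z..Real.sqrt 2, ρ x : ℝ) : ℂ) * Complex.I))) ∧
    (Real.sqrt 2 < z →
      Tendsto (fun ε : ℝ => gfun ρ ((z : ℂ) + (ε : ℂ) * Complex.I)) (𝓝[>] 0)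
        (𝓝 (((∫ x in E, Real.log |z - x| * ρ x : ℝ) : ℂ))) ∧
      Tendsto (fun ε : ℝ => gfun ρ ((z : ℂ) - (ε : ℂ) * Complex.I)) (𝓝[>] 0)
        (𝓝 (((∫ x in E, Real.log |z - x| * ρ x : ℝ) : ℂ)))) := by
  obtain ⟨hplus, hminus⟩ := gfun_boundary_values_of_inter_Ioi hcont.continuousOn z
  refine ⟨fun hz => ?_, fun hz => ?_, fun hz => ?_⟩
  · have hset : E ∩ Ioi z = E := inter_eq_left.2 fun x hx => hz.trans_le hx.1
    rw [hset] at hplus hminus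
    exact ⟨hplus, hminus⟩
  · have hset : E ∩ Ioi z = Ioc z (Real.sqrt 2) := by
      ext x
      simp only [E, mem_inter_iff, mem_Icc, mem_Ioi, mem_Ioc]
      exact ⟨fun h => ⟨h.2, h.1.2⟩, fun h => ⟨⟨(hz.1.trans h.1).le, h.2⟩, h.1⟩⟩
    rw [hset, ← intervalIntegral.integral_of_le hz.2.le] at hplus hminus
    exact ⟨hplus, hminus⟩
  · have hset : E ∩ Ioi z = ∅ :=
      eq_empty_of_forall_notMem fun x hx => hz.not_gt (mem_Ioi.1 hx.2 |>.trans_le hx.1.2)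
    simpa [hset] using And.intro hplus hminus

/-- One-sided boundary values of the g-function on the real line: for real `z ≠ ±√2`
the limits `g±(z) = lim_{ε↓0} g(z ± iε)` exist, and they are given by
`∫_E ln|z-x| ρ ± iπ∫_E ρ` for `z < -√2`, by `∫_E ln|z-x| ρ ± iπ∫_z^{√2} ρ` for
`-√2 < z < √2`, and by `∫_E ln|z-x| ρ` for `z > √2`. -/
theorem gfun_boundary_values (ρ : ℝ → ℝ) (hcont : Continuous ρ)
    (hnonneg : ∀ x, 0 ≤ ρ x) (hsupp : ∀ x, x ∉ E → ρ x = 0)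
    (z : ℝ) (hz1 : z ≠ Real.sqrt 2) (hz2 : z ≠ -Real.sqrt 2) :
    (z < -Real.sqrt 2 →
      Tendsto (fun ε : ℝ => gfun ρ ((z : ℂ) + (ε : ℂ) * Complex.I)) (𝓝[>] 0)
        (𝓝 (((∫ x in E, Real.log |z - x| * ρ x : ℝ) : ℂ)
          + (Real.pi : ℂ) * ((∫ x in E, ρ x : ℝ) : ℂ) * Complex.I)) ∧
      Tendsto (fun ε : ℝ => gfun ρ ((z : ℂ) - (ε : ℂ) * Complex.I)) (𝓝[>] 0)
        (𝓝 (((∫ x in E, Real.log |z - x| * ρ x : ℝ) : ℂ)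
          - (Real.pi : ℂ) * ((∫ x in E, ρ x : ℝ) : ℂ) * Complex.I))) ∧
    (z ∈ Ioo (-Real.sqrt 2) (Real.sqrt 2) →
      Tendsto (fun ε : ℝ => gfun ρ ((z : ℂ) + (ε : ℂ) * Complex.I)) (𝓝[>] 0)
        (𝓝 (((∫ x in E, Real.log |z - x| * ρ x : ℝ) : ℂ)
          + (Real.pi : ℂ) * ((∫ x in z..Real.sqrt 2, ρ x : ℝ) : ℂ) * Complex.I)) ∧
      Tendsto (fun ε : ℝ => gfun ρ ((z : ℂ) - (ε : ℂ) * Complex.I)) (𝓝[>] 0)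
        (𝓝 (((∫ x in E, Real.log |z - x| * ρ x : ℝ) : ℂ)
          - (Real.pi : ℂ) * ((∫ x in z..Real.sqrt 2, ρ x : ℝ) : ℂ) * Complex.I))) ∧
    (Real.sqrt 2 < z →
      Tendsto (fun ε : ℝ => gfun ρ ((z : ℂ) + (ε : ℂ) * Complex.I)) (𝓝[>] 0)
        (𝓝 (((∫ x in E, Real.log |z - x| * ρ x : ℝ) : ℂ))) ∧
      Tendsto (fun ε : ℝ => gfun ρ ((z : ℂ) - (ε : ℂ) * Complex.I)) (𝓝[>] 0)
        (𝓝 (((∫ x in E, Real.log |z - x| * ρ x : ℝ) : ℂ)))) :=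
  gfun_boundary_values_general ρ hcont z
end

section
/- Let α ∈ ℝ and let a, b, p, q, r : ℝ → ℂ be differentiable functions with q(x) ≠ 0 for all x, satisfying for all x ∈ ℝ the system a′(x) = x/2 − q(x), b′(x) = 1/2 − x·a(x) + 2p(x), p′(x) = r(x) − q(x)·b(x), q′(x) = 2(a(x)·q(x) − p(x)), r′(x) = 2(b(x)·p(x) − a(x)·r(x)), together with the constraints q(x) = x/2 − b(x) − a(x)² and 4(p(x)² + r(x)·q(x)) = α². Then q is twice differentiable and solves the Painlevé-XXXIV equation: q″(x) = q′(x)²/(2q(x)) + 2x·q(x) − 4q(x)² − α²/(2q(x)) for all x ∈ ℝ. -/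
/-! Differentiating `q' = 2(a q - p)` once more and substituting the equations for `a'` and `p'`
gives `q''` as a polynomial in `x, a, b, p, q, r`. The first constraint eliminates `b`; the second,
after division by `q`, eliminates `r` in favour of `α²` and `p²`, and the remaining terms recombine
into `(q')² / (2q)` since `a q - p = q' / 2`. -/

theorem painleve_XXXIV_of_constraints {K : Type*} [Field K] [CharZero K] {x a b p q r c : K}
    (hq : q ≠ 0) (hb : q = x / 2 - b - a ^ 2) (hc : 4 * (p ^ 2 + r * q) = c) :
    2 * ((x / 2 - q) * q + a * (2 * (a * q - p)) - (r - q * b))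
      = (2 * (a * q - p)) ^ 2 / (2 * q) + 2 * x * q - 4 * q ^ 2 - c / (2 * q) := by
  rw [← hc]
  field_simp
  linear_combination 4 * q ^ 2 * hb

theorem lax_system_implies_painleve_XXXIV_general (α : ℝ) (a b p q r : ℝ → ℂ)
    (ha : Differentiable ℝ a) (hp : Differentiable ℝ p)
    (hq : Differentiable ℝ q)
    (hqne : ∀ x : ℝ, q x ≠ 0)
    (eqa : ∀ x : ℝ, deriv a x = (x : ℂ) / 2 - q x)
    (eqp : ∀ x : ℝ, deriv p x = r x - q x * b x)
    (eqq : ∀ x : ℝ, deriv q x = 2 * (a x * q x - p x))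
    (con1 : ∀ x : ℝ, q x = (x : ℂ) / 2 - b x - a x ^ 2)
    (con2 : ∀ x : ℝ, 4 * (p x ^ 2 + r x * q x) = (α : ℂ) ^ 2) :
    Differentiable ℝ (deriv q) ∧
    ∀ x : ℝ, deriv (deriv q) x
      = (deriv q x) ^ 2 / (2 * q x) + 2 * (x : ℂ) * q x - 4 * q x ^ 2
        - (α : ℂ) ^ 2 / (2 * q x) := by
  have hq'' : ∀ x,
      HasDerivAt (deriv q) (2 * (deriv a x * q x + a x * deriv q x - deriv p x)) x := by
    intro x
    have h := (((ha x).hasDerivAt.fun_mul (hq x).hasDerivAt).fun_sub (hp x).hasDerivAt).const_mul 2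
    rwa [← funext eqq] at h
  refine ⟨fun x => (hq'' x).differentiableAt, fun x => ?_⟩
  rw [(hq'' x).deriv, eqa, eqp, eqq]
  exact painleve_XXXIV_of_constraints (hqne x) (con1 x) (con2 x)

/-- The Lax-system/ODE formulation: if `a, b, p, q, r : ℝ → ℂ` are differentiable,
`q` never vanishes, they satisfy the coupled first-order system
`a' = x/2 - q`, `b' = 1/2 - x a + 2p`, `p' = r - q b`, `q' = 2(a q - p)`,
`r' = 2(b p - a r)` together with the constraints `q = x/2 - b - a²` and
`4(p² + r q) = α²`, then `q` is twice differentiable and solves the Painlevé-XXXIV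
equation `q'' = (q')²/(2q) + 2x q - 4q² - α²/(2q)`. -/
theorem lax_system_implies_painleve_XXXIV (α : ℝ) (a b p q r : ℝ → ℂ)
    (ha : Differentiable ℝ a) (hb : Differentiable ℝ b) (hp : Differentiable ℝ p)
    (hq : Differentiable ℝ q) (hr : Differentiable ℝ r)
    (hqne : ∀ x : ℝ, q x ≠ 0)
    (eqa : ∀ x : ℝ, deriv a x = (x : ℂ) / 2 - q x)
    (eqb : ∀ x : ℝ, deriv b x = 1 / 2 - (x : ℂ) * a x + 2 * p x)
    (eqp : ∀ x : ℝ, deriv p x = r x - q x * b x)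
    (eqq : ∀ x : ℝ, deriv q x = 2 * (a x * q x - p x))
    (eqr : ∀ x : ℝ, deriv r x = 2 * (b x * p x - a x * r x))
    (con1 : ∀ x : ℝ, q x = (x : ℂ) / 2 - b x - a x ^ 2)
    (con2 : ∀ x : ℝ, 4 * (p x ^ 2 + r x * q x) = (α : ℂ) ^ 2) :
    Differentiable ℝ (deriv q) ∧
    ∀ x : ℝ, deriv (deriv q) x
      = (deriv q x) ^ 2 / (2 * q x) + 2 * (x : ℂ) * q x - 4 * q x ^ 2
        - (α : ℂ) ^ 2 / (2 * q x) :=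
  lax_system_implies_painleve_XXXIV_general α a b p q r ha hp hq hqne eqa eqp eqq con1 con2
end

section
/- Let α ∈ ℝ and let u : ℝ → ℝ be twice differentiable satisfying the Painlevé-II equation u″(y) = y·u(y) + 2u(y)³ − (α + 1/2) for all y ∈ ℝ. Define q : ℝ → ℝ by q(x) := −2^{−1/3}·( y/2 + u(y)² + u′(y) ) evaluated at y = −2^{1/3}·x. Then q is twice differentiable, and at every x with q(x) ≠ 0 it satisfies the Painlevé-XXXIV equation q″(x) = q′(x)²/(2q(x)) + 2x·q(x) − 4q(x)² − α²/(2q(x)). -/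
/-!
Set `y = -2^{1/3} x`. Along a Painlevé-II solution `u`, the Hamiltonian momentum
`p = y/2 + u² + u'` obeys the Riccati-type relation `p' = 2 u p - α`. Differentiating once more
and eliminating `u = (p' + α)/(2p)` and `u' = p - u² - y/2` gives
`p'' = p'²/(2p) + 2p² - y p - α²/(2p)`, which the rescaling `q(x) = -2^{-1/3} p(-2^{1/3} x)`
turns into the Painlevé-XXXIV equation, because `(2^{1/3})³ = 2`.
-/

/-- The momentum conjugate to `u` for the Hamiltonian `H = p²/2 - (u² + y/2) p + α u` of
Painlevé II. -/
noncomputable def painleveIIMomentum (u : ℝ → ℝ) (y : ℝ) : ℝ :=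
  y / 2 + u y ^ 2 + deriv u y

section Momentum

variable {α : ℝ} {u : ℝ → ℝ}

theorem hasDerivAt_painleveIIMomentum {y : ℝ} (hu : DifferentiableAt ℝ u y)
    (hu' : DifferentiableAt ℝ (deriv u) y)
    (hP2 : deriv (deriv u) y = y * u y + 2 * u y ^ 3 - (α + 1 / 2)) :
    HasDerivAt (painleveIIMomentum u) (2 * u y * painleveIIMomentum u y - α) y := by
  have h := (((hasDerivAt_id' y).div_const 2).fun_add (hu.hasDerivAt.fun_pow 2)).fun_add
    hu'.hasDerivAt
  refine h.congr_deriv ?_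
  rw [hP2, painleveIIMomentum]
  ring

variable (hu : Differentiable ℝ u) (hu' : Differentiable ℝ (deriv u))
  (hP2 : ∀ y : ℝ, deriv (deriv u) y = y * u y + 2 * u y ^ 3 - (α + 1 / 2))
include hu hu' hP2

theorem differentiable_painleveIIMomentum : Differentiable ℝ (painleveIIMomentum u) :=
  fun y => (hasDerivAt_painleveIIMomentum (hu y) (hu' y) (hP2 y)).differentiableAt

theorem deriv_painleveIIMomentum :
    deriv (painleveIIMomentum u) = fun y => 2 * u y * painleveIIMomentum u y - α :=
  funext fun y => (hasDerivAt_painleveIIMomentum (hu y) (hu' y) (hP2 y)).deriv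

theorem hasDerivAt_deriv_painleveIIMomentum (y : ℝ) :
    HasDerivAt (deriv (painleveIIMomentum u))
      (2 * deriv u y * painleveIIMomentum u y
        + 2 * u y * (2 * u y * painleveIIMomentum u y - α)) y := by
  rw [deriv_painleveIIMomentum hu hu' hP2]
  have hp := hasDerivAt_painleveIIMomentum (hu y) (hu' y) (hP2 y)
  refine ((((hu y).hasDerivAt.const_mul 2).fun_mul hp).sub_const α).congr_deriv ?_
  ring

theorem differentiable_deriv_painleveIIMomentum :
    Differentiable ℝ (deriv (painleveIIMomentum u)) :=
  fun y => (hasDerivAt_deriv_painleveIIMomentum hu hu' hP2 y).differentiableAt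

theorem deriv_deriv_painleveIIMomentum {y : ℝ} (hp : painleveIIMomentum u y ≠ 0) :
    deriv (deriv (painleveIIMomentum u)) y
      = deriv (painleveIIMomentum u) y ^ 2 / (2 * painleveIIMomentum u y)
        + 2 * painleveIIMomentum u y ^ 2 - y * painleveIIMomentum u y
        - α ^ 2 / (2 * painleveIIMomentum u y) := by
  have hu'y : deriv u y = painleveIIMomentum u y - u y ^ 2 - y / 2 := by
    rw [painleveIIMomentum]; ring
  rw [(hasDerivAt_deriv_painleveIIMomentum hu hu' hP2 y).deriv,
    deriv_painleveIIMomentum hu hu' hP2, hu'y]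
  field_simp
  ring

end Momentum

theorem deriv_const_mul_comp_mul {𝕜 : Type*} [NontriviallyNormedField 𝕜] (a b : 𝕜)
    (f : 𝕜 → 𝕜) :
    deriv (fun x => a * f (b * x)) = fun x => a * b * deriv f (b * x) := by
  rw [deriv_const_mul_field']
  funext x
  rw [deriv_comp_mul_left (f := f), smul_eq_mul, mul_assoc]

theorem painleveXXXIV_of_rescaled {c α x p p' p'' : ℝ} (hc : c ^ 3 = 2) (hp : p ≠ 0)
    (h : p'' = p' ^ 2 / (2 * p) + 2 * p ^ 2 - (-c * x) * p - α ^ 2 / (2 * p)) :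
    -c * p'' = p' ^ 2 / (2 * (-c⁻¹ * p)) + 2 * x * (-c⁻¹ * p) - 4 * (-c⁻¹ * p) ^ 2
      - α ^ 2 / (2 * (-c⁻¹ * p)) := by
  have hc0 : c ≠ 0 := by rintro rfl; norm_num at hc
  rw [h]
  field_simp
  linear_combination (-4 * p ^ 3 - 2 * c * p ^ 2 * x) * hc

/-- The Okamoto/Gambier correspondence: if `u` is a twice differentiable solution of
the Painlevé-II equation `u'' = y u + 2u³ - (α + 1/2)`, then
`q(x) = -2^{-1/3} (y/2 + u(y)² + u'(y))` evaluated at `y = -2^{1/3} x` is twice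
differentiable and, wherever `q(x) ≠ 0`, solves the Painlevé-XXXIV equation
`q'' = (q')²/(2q) + 2x q - 4q² - α²/(2q)`. -/
theorem painleve_II_to_painleve_XXXIV (α : ℝ) (u : ℝ → ℝ)
    (hu : Differentiable ℝ u) (hu' : Differentiable ℝ (deriv u))
    (hP2 : ∀ y : ℝ, deriv (deriv u) y = y * u y + 2 * u y ^ 3 - (α + 1 / 2))
    (q : ℝ → ℝ)
    (hqdef : ∀ x : ℝ,
      q x = -(2 : ℝ) ^ (-(1 : ℝ) / 3) *
        ((-(2 : ℝ) ^ ((1 : ℝ) / 3) * x) / 2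
          + u (-(2 : ℝ) ^ ((1 : ℝ) / 3) * x) ^ 2
          + deriv u (-(2 : ℝ) ^ ((1 : ℝ) / 3) * x))) :
    Differentiable ℝ q ∧ Differentiable ℝ (deriv q) ∧
    ∀ x : ℝ, q x ≠ 0 →
      deriv (deriv q) x
        = (deriv q x) ^ 2 / (2 * q x) + 2 * x * q x - 4 * q x ^ 2
          - α ^ 2 / (2 * q x) := by
  set c : ℝ := (2 : ℝ) ^ ((1 : ℝ) / 3)
  set p := painleveIIMomentum u
  have hc : c ≠ 0 := (Real.rpow_pos_of_pos two_pos _).ne'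
  have hc3 : c ^ 3 = 2 := by
    rw [show c = 2 ^ ((3 : ℕ) : ℝ)⁻¹ by simp [c]]
    exact Real.rpow_inv_natCast_pow zero_le_two three_ne_zero
  have hq : q = fun x => -c⁻¹ * p (-c * x) := by
    funext x
    rw [hqdef x, neg_div, Real.rpow_neg zero_le_two]
    rfl
  have hp := differentiable_painleveIIMomentum hu hu' hP2
  have hp' := differentiable_deriv_painleveIIMomentum hu hu' hP2
  have hq' : deriv q = fun x => deriv p (-c * x) := by
    simp only [hq, deriv_const_mul_comp_mul, neg_mul_neg, inv_mul_cancel₀ hc, one_mul]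
  have hq'' : deriv (deriv q) = fun x => -c * deriv (deriv p) (-c * x) := by
    have h := deriv_const_mul_comp_mul 1 (-c) (deriv p)
    simp only [one_mul] at h
    rw [hq', h]
  refine ⟨hq ▸ (hp.comp (differentiable_id.const_mul _)).const_mul _,
    hq' ▸ hp'.comp (differentiable_id.const_mul _), fun x hx => ?_⟩
  have hpx : p (-c * x) ≠ 0 := fun h => hx (by rw [hq]; simp only [h, mul_zero])
  rw [hq'', hq', hq]
  exact painleveXXXIV_of_rescaled hc3 hpx
    (deriv_deriv_painleveIIMomentum hu hu' hP2 hpx)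
end

section
/- Let u : ℝ → ℝ be twice differentiable satisfying the Painlevé-II equation u″(x) = x·u(x) + 2u(x)³ − 1/2 for all x ∈ ℝ, and let v : ℝ → ℝ be twice differentiable such that v(t)² = 2^{−1/3}·( x/2 + u(x)² + u′(x) ) evaluated at x = −2^{1/3}·t, for all t ∈ ℝ. Then at every t with v(t) ≠ 0, v satisfies the Painlevé-II equation with parameter 0: v″(t) = t·v(t) + 2v(t)³. -/
/-! The substitution `W = x/2 + u² + u'` turns Painlevé-II with `β = 1/2` into `W' = 2uW`, hence into
the Painlevé-XXXIV equation `W W'' - W'²/2 = 2W³ - xW²`. The rescaling `V(t) = 2^{-1/3} W(-2^{1/3} t)`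
satisfies `2VV'' - V'² = 4tV² + 8V³`, and for `V = v²` the left side is `4v³v''`, so dividing by `v³`
gives Painlevé-II with `β = 0`. -/

section SquaredForm

variable {v : ℝ → ℝ}

theorem deriv_fun_sq (hv : Differentiable ℝ v) :
    deriv (fun s => v s ^ 2) = fun s => 2 * v s * deriv v s := by
  funext s
  rw [deriv_fun_pow (hv s)]
  ring

theorem two_mul_sq_mul_deriv_deriv_fun_sq_sub (hv : Differentiable ℝ v) {t : ℝ}
    (hv' : DifferentiableAt ℝ (deriv v) t) :
    2 * v t ^ 2 * deriv (deriv fun s => v s ^ 2) t - deriv (fun s => v s ^ 2) t ^ 2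
      = 4 * v t ^ 3 * deriv (deriv v) t := by
  have h : HasDerivAt (fun s => 2 * v s * deriv v s)
      (2 * deriv v t * deriv v t + 2 * v t * deriv (deriv v) t) t :=
    ((hv t).hasDerivAt.const_mul 2).mul hv'.hasDerivAt
  rw [deriv_fun_sq hv, h.deriv]
  ring

theorem painleveII_zero_of_sq (hv : Differentiable ℝ v) {t : ℝ}
    (hv' : DifferentiableAt ℝ (deriv v) t) (ht : v t ≠ 0)
    (hV : 2 * v t ^ 2 * deriv (deriv fun s => v s ^ 2) t - deriv (fun s => v s ^ 2) t ^ 2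
      = 4 * t * (v t ^ 2) ^ 2 + 8 * (v t ^ 2) ^ 3) :
    deriv (deriv v) t = t * v t + 2 * v t ^ 3 := by
  rw [two_mul_sq_mul_deriv_deriv_fun_sq_sub hv hv'] at hV
  have h3 : 4 * v t ^ 3 ≠ 0 := by positivity
  apply mul_left_cancel₀ h3
  linear_combination hV

end SquaredForm

noncomputable def painleveXXXIVOfII (u : ℝ → ℝ) (x : ℝ) : ℝ := x / 2 + u x ^ 2 + deriv u x

section PainleveXXXIV

variable {u : ℝ → ℝ}

theorem hasDerivAt_painleveXXXIVOfII {x : ℝ} (hu : DifferentiableAt ℝ u x)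
    (hu' : DifferentiableAt ℝ (deriv u) x)
    (hP2 : deriv (deriv u) x = x * u x + 2 * u x ^ 3 - 1 / 2) :
    HasDerivAt (painleveXXXIVOfII u) (2 * u x * painleveXXXIVOfII u x) x := by
  have h : HasDerivAt (painleveXXXIVOfII u)
      (1 / 2 + ((2 : ℕ) : ℝ) * u x ^ (2 - 1) * deriv u x + deriv (deriv u) x) x :=
    (((hasDerivAt_id' x).div_const 2).add (hu.hasDerivAt.pow 2)).add hu'.hasDerivAt
  refine h.congr_deriv ?_
  rw [hP2, painleveXXXIVOfII]
  push_cast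
  ring

theorem deriv_painleveXXXIVOfII (hu : Differentiable ℝ u) (hu' : Differentiable ℝ (deriv u))
    (hP2 : ∀ x : ℝ, deriv (deriv u) x = x * u x + 2 * u x ^ 3 - 1 / 2) :
    deriv (painleveXXXIVOfII u) = fun x => 2 * u x * painleveXXXIVOfII u x :=
  funext fun x => (hasDerivAt_painleveXXXIVOfII (hu x) (hu' x) (hP2 x)).deriv

theorem painleveXXXIV_painleveXXXIVOfII (hu : Differentiable ℝ u)
    (hu' : Differentiable ℝ (deriv u))
    (hP2 : ∀ x : ℝ, deriv (deriv u) x = x * u x + 2 * u x ^ 3 - 1 / 2) (x : ℝ) :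
    painleveXXXIVOfII u x * deriv (deriv (painleveXXXIVOfII u)) x
        - deriv (painleveXXXIVOfII u) x ^ 2 / 2
      = 2 * painleveXXXIVOfII u x ^ 3 - x * painleveXXXIVOfII u x ^ 2 := by
  have hW := hasDerivAt_painleveXXXIVOfII (hu x) (hu' x) (hP2 x)
  have hW' : HasDerivAt (fun y => 2 * u y * painleveXXXIVOfII u y)
      (2 * deriv u x * painleveXXXIVOfII u x + 2 * u x * (2 * u x * painleveXXXIVOfII u x)) x :=
    ((hu x).hasDerivAt.const_mul 2).mul hW
  rw [deriv_painleveXXXIVOfII hu hu' hP2, hW'.deriv]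
  unfold painleveXXXIVOfII
  ring

end PainleveXXXIV

-- `a ^ 3 = -2` matches the `W²`-terms and `a ^ 2 = 2 * k` the `W³`-terms.
theorem sq_painleveII_of_painleveXXXIV_rescale {W : ℝ → ℝ}
    (hW : ∀ x, W x * deriv (deriv W) x - deriv W x ^ 2 / 2 = 2 * W x ^ 3 - x * W x ^ 2)
    {a k : ℝ} (ha : a ^ 3 = -2) (hk : a ^ 2 = 2 * k) (t : ℝ) :
    2 * (k * W (a * t)) * deriv (deriv fun s => k * W (a * s)) t
        - deriv (fun s => k * W (a * s)) t ^ 2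
      = 4 * t * (k * W (a * t)) ^ 2 + 8 * (k * W (a * t)) ^ 3 := by
  have h1 : deriv (fun s => k * W (a * s)) = fun s => k * a * deriv W (a * s) := by
    funext s
    rw [deriv_const_mul_field, deriv_comp_mul_left, smul_eq_mul]; ring
  have h2 : deriv (fun s => k * a * deriv W (a * s)) t
      = k * a ^ 2 * deriv (deriv W) (a * t) := by
    rw [deriv_const_mul_field, deriv_comp_mul_left, smul_eq_mul]; ring
  rw [h1, h2]
  linear_combination (2 * k ^ 2 * a ^ 2) * hW (a * t) + (-2 * k ^ 2 * t * W (a * t) ^ 2) * ha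
    + 4 * k ^ 2 * W (a * t) ^ 3 * hk

theorem neg_cbrt_two_pow_three : (-(2 : ℝ) ^ ((1 : ℝ) / 3)) ^ 3 = -2 := by
  rw [neg_pow, ← Real.rpow_natCast ((2 : ℝ) ^ _), ← Real.rpow_mul zero_le_two]
  norm_num

theorem neg_cbrt_two_sq : (-(2 : ℝ) ^ ((1 : ℝ) / 3)) ^ 2 = 2 * (2 : ℝ) ^ (-(1 : ℝ) / 3) := by
  rw [neg_sq, ← Real.rpow_natCast ((2 : ℝ) ^ _), ← Real.rpow_mul zero_le_two]
  nth_rw 2 [← Real.rpow_one 2]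
  rw [← Real.rpow_add two_pos]
  norm_num

/-- If `u` is a twice differentiable solution of the Painlevé-II equation
`u'' = x u + 2u³ - 1/2` and `v` is twice differentiable with
`v(t)² = 2^{-1/3} (x/2 + u(x)² + u'(x))` at `x = -2^{1/3} t`, then wherever
`v(t) ≠ 0`, `v` solves the Painlevé-II equation with parameter `0`:
`v'' = t v + 2v³`. -/
theorem painleve_II_square_root_identity (u v : ℝ → ℝ)
    (hu : Differentiable ℝ u) (hu' : Differentiable ℝ (deriv u))
    (hP2 : ∀ x : ℝ, deriv (deriv u) x = x * u x + 2 * u x ^ 3 - 1 / 2)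
    (hv : Differentiable ℝ v) (hv' : Differentiable ℝ (deriv v))
    (hsq : ∀ t : ℝ,
      v t ^ 2 = (2 : ℝ) ^ (-(1 : ℝ) / 3) *
        ((-(2 : ℝ) ^ ((1 : ℝ) / 3) * t) / 2
          + u (-(2 : ℝ) ^ ((1 : ℝ) / 3) * t) ^ 2
          + deriv u (-(2 : ℝ) ^ ((1 : ℝ) / 3) * t))) :
    ∀ t : ℝ, v t ≠ 0 → deriv (deriv v) t = t * v t + 2 * v t ^ 3 := by
  intro t ht
  have hV : (fun s => v s ^ 2) = fun s => (2 : ℝ) ^ (-(1 : ℝ) / 3) *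
      painleveXXXIVOfII u (-(2 : ℝ) ^ ((1 : ℝ) / 3) * s) := funext hsq
  refine painleveII_zero_of_sq hv (hv' t) ht ?_
  rw [hV, hsq t]
  exact sq_painleveII_of_painleveXXXIV_rescale (painleveXXXIV_painleveXXXIVOfII hu hu' hP2)
    neg_cbrt_two_pow_three neg_cbrt_two_sq t
end

section
/- Let α ∈ ℝ, let I ⊆ ℝ be an open interval, and let σ : I → ℝ be three times differentiable satisfying the Jimbo–Miwa–Okamoto sigma-form of Painlevé-II, (σ″(t))² + 4σ′(t)·( (σ′(t))² − t·σ′(t) + σ(t) ) = α² for all t ∈ I, with σ′(t) ≠ 0 and σ″(t) ≠ 0 for all t ∈ I. Then q := σ′ satisfies the Painlevé-XXXIV equation q″(t) = q′(t)²/(2q(t)) + 2t·q(t) − 4q(t)² − α²/(2q(t)) for all t ∈ I. -/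
/-!
Differentiating the sigma-form gives `σ'' · (2σ''' + 4(σ'² - tσ' + σ) + 8σ'² - 4tσ') = 0`,
so `σ'' ≠ 0` expresses `σ'''` through `t, σ, σ'`. The sigma-form itself then eliminates `σ`:
`σ'² - tσ' + σ = (α² - σ''²) / (4σ')`, which needs `σ' ≠ 0`.
-/

open Filter Topology

lemma third_deriv_eq_of_sigmaPII {u v w : ℝ → ℝ} {d α t : ℝ}
    (hu : HasDerivAt u (v t) t) (hv : HasDerivAt v (w t) t) (hw : HasDerivAt w d t)
    (hsig : ∀ᶠ s in 𝓝 t, w s ^ 2 + 4 * v s * (v s ^ 2 - s * v s + u s) = α ^ 2)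
    (hw0 : w t ≠ 0) :
    d = -2 * (v t ^ 2 - t * v t + u t) - 4 * v t ^ 2 + 2 * t * v t := by
  have hF := (hw.pow 2).add
    ((hv.const_mul 4).mul (((hv.pow 2).sub ((hasDerivAt_id' t).mul hv)).add hu))
  have hzero := hF.unique ((hasDerivAt_const t (α ^ 2)).congr_of_eventuallyEq hsig)
  simp only [Pi.add_apply, Pi.sub_apply, Pi.mul_apply, Pi.pow_apply] at hzero
  have hfactor :
      w t * (2 * d + 4 * (v t ^ 2 - t * v t + u t) + 8 * v t ^ 2 - 4 * t * v t) = 0 := by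
    linear_combination hzero
  linarith [(mul_eq_zero.mp hfactor).resolve_left hw0]

lemma painleveXXXIV_of_sigmaPII_relations {a b c d t α : ℝ} (hb : b ≠ 0)
    (hsig : c ^ 2 + 4 * b * (b ^ 2 - t * b + a) = α ^ 2)
    (hd : d = -2 * (b ^ 2 - t * b + a) - 4 * b ^ 2 + 2 * t * b) :
    d = c ^ 2 / (2 * b) + 2 * t * b - 4 * b ^ 2 - α ^ 2 / (2 * b) := by
  field_simp
  linear_combination 2 * b * hd - hsig

theorem sigma_form_to_painleve_XXXIV_general (α : ℝ) (I : Set ℝ)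
    (hIopen : IsOpen I) (σ : ℝ → ℝ)
    (hd1 : ∀ t ∈ I, DifferentiableAt ℝ σ t)
    (hd2 : ∀ t ∈ I, DifferentiableAt ℝ (deriv σ) t)
    (hd3 : ∀ t ∈ I, DifferentiableAt ℝ (deriv (deriv σ)) t)
    (hsig : ∀ t ∈ I,
      (deriv (deriv σ) t) ^ 2
        + 4 * deriv σ t * ((deriv σ t) ^ 2 - t * deriv σ t + σ t) = α ^ 2)
    (hne1 : ∀ t ∈ I, deriv σ t ≠ 0)
    (hne2 : ∀ t ∈ I, deriv (deriv σ) t ≠ 0) :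
    ∀ t ∈ I,
      deriv (deriv (deriv σ)) t
        = (deriv (deriv σ) t) ^ 2 / (2 * deriv σ t) + 2 * t * deriv σ t
          - 4 * (deriv σ t) ^ 2 - α ^ 2 / (2 * deriv σ t) := by
  intro t ht
  refine painleveXXXIV_of_sigmaPII_relations (hne1 t ht) (hsig t ht) ?_
  exact third_deriv_eq_of_sigmaPII (hd1 t ht).hasDerivAt (hd2 t ht).hasDerivAt
    (hd3 t ht).hasDerivAt (eventually_of_mem (hIopen.mem_nhds ht) hsig) (hne2 t ht)

/-- If `σ` is three times differentiable on an open interval `I` and solves the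
Jimbo–Miwa–Okamoto sigma-form of Painlevé-II,
`(σ'')² + 4σ'((σ')² - t σ' + σ) = α²`, with `σ'` and `σ''` nonvanishing on `I`, then
`q := σ'` solves the Painlevé-XXXIV equation
`q'' = (q')²/(2q) + 2t q - 4q² - α²/(2q)` on `I`. -/
theorem sigma_form_to_painleve_XXXIV (α : ℝ) (I : Set ℝ)
    (hIopen : IsOpen I) (hIconv : Convex ℝ I) (σ : ℝ → ℝ)
    (hd1 : ∀ t ∈ I, DifferentiableAt ℝ σ t)
    (hd2 : ∀ t ∈ I, DifferentiableAt ℝ (deriv σ) t)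
    (hd3 : ∀ t ∈ I, DifferentiableAt ℝ (deriv (deriv σ)) t)
    (hsig : ∀ t ∈ I,
      (deriv (deriv σ) t) ^ 2
        + 4 * deriv σ t * ((deriv σ t) ^ 2 - t * deriv σ t + σ t) = α ^ 2)
    (hne1 : ∀ t ∈ I, deriv σ t ≠ 0)
    (hne2 : ∀ t ∈ I, deriv (deriv σ) t ≠ 0) :
    ∀ t ∈ I,
      deriv (deriv (deriv σ)) t
        = (deriv (deriv σ) t) ^ 2 / (2 * deriv σ t) + 2 * t * deriv σ t
          - 4 * (deriv σ t) ^ 2 - α ^ 2 / (2 * deriv σ t) :=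
  sigma_form_to_painleve_XXXIV_general α I hIopen σ hd1 hd2 hd3 hsig hne1 hne2
end

section
/- Let n ≥ 1, let w : ℝ → ℂ be measurable with ∫_ℝ |x|^m·|w(x)| dx < ∞ for every m ∈ ℕ, and let φ : ℝ → ℂ be bounded and measurable. Suppose π₀, …, π_{n−1} are polynomials with complex coefficients such that deg π_j = j with nonzero leading coefficient ς_j, and ∫_ℝ π_j(x)·π_k(x)·w(x) dx = δ_{jk} for 0 ≤ j, k ≤ n−1. Then ∫_{ℝⁿ} ∏_{1≤j<k≤n} (x_k − x_j)² · ∏_{m=1}^{n} (1 − φ(x_m))·w(x_m) dx₁…dxₙ = n! · ( ∏_{j=0}^{n−1} ς_j^{−2} ) · det[ δ_{jk} − ∫_ℝ φ(x)·π_{j−1}(x)·π_{k−1}(x)·w(x) dx ]_{j,k=1}^{n}. -/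
/-!
Heine's identity: the matrix `[π_j(x_k)]` is the Vandermonde matrix times the upper triangular
matrix of coefficients of the `π_j`, so `∏_{j<k} (x_k - x_j)² = (∏ ς_j)⁻² det[π_j(x_k)]²`.
Moving the weights `(1 - φ(x_k)) w(x_k)` into the columns of one factor, Andréief's identity
(expand both determinants over permutations and integrate coordinatewise by Fubini) turns the
`n`-fold integral into `n! det[∫ π_j π_k (1 - φ) w]`, and orthonormality gives the entries.
-/

open MeasureTheory Matrix Polynomial Finset Equiv

theorem Matrix.sum_perm_sign_mul_sign_mul_prod_eq_factorial_mul_det {ι R : Type*} [Fintype ι]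
    [DecidableEq ι] [CommRing R] (M : Matrix ι ι R) :
    ∑ σ : Perm ι, ∑ τ : Perm ι, ((Perm.sign σ : ℤ) : R) * (Perm.sign τ : ℤ) * ∏ i, M (σ i) (τ i)
      = ((Fintype.card ι).factorial : R) * M.det := by
  have row_sum (σ : Perm ι) :
      ∑ τ : Perm ι, ((Perm.sign σ : ℤ) : R) * (Perm.sign τ : ℤ) * ∏ i, M (σ i) (τ i)
        = M.det := by
    have hperm := det_permute σ M
    rw [← det_transpose, det_apply'] at hperm
    simp only [transpose_apply, submatrix_apply, id] at hperm
    simp_rw [mul_assoc, ← mul_sum, hperm, ← mul_assoc, ← Int.cast_mul, ← Units.val_mul,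
      Int.units_mul_self, Units.val_one, Int.cast_one, one_mul]
  simp_rw [row_sum, sum_const, Finset.card_univ, Fintype.card_perm, nsmul_eq_mul]

theorem MeasureTheory.integral_det_mul_det {ι α 𝕜 : Type*} [Fintype ι] [DecidableEq ι]
    [RCLike 𝕜] [MeasurableSpace α] {μ : Measure α} [SigmaFinite μ] (f g : ι → α → 𝕜)
    (hfg : ∀ j k, Integrable (fun a => f j a * g k a) μ) :
    (∫ x : ι → α, det (of fun j k => f j (x k)) * det (of fun j k => g j (x k))
        ∂(Measure.pi fun _ => μ))
      = ((Fintype.card ι).factorial : 𝕜) * det (of fun j k => ∫ a, f j a * g k a ∂μ) := by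
  have expand (x : ι → α) : det (of fun j k => f j (x k)) * det (of fun j k => g j (x k))
      = ∑ σ : Perm ι, ∑ τ : Perm ι, ((Perm.sign σ : ℤ) : 𝕜) * (Perm.sign τ : ℤ)
          * ∏ i, f (σ i) (x i) * g (τ i) (x i) := by
    simp_rw [det_apply', sum_mul_sum, prod_mul_distrib, of_apply]
    exact sum_congr rfl fun σ _ => sum_congr rfl fun τ _ => by ring
  have hint (σ τ : Perm ι) := (Integrable.fintype_prod (μ := fun _ => μ)
    fun i => hfg (σ i) (τ i)).const_mul (((Perm.sign σ : ℤ) : 𝕜) * (Perm.sign τ : ℤ))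
  simp_rw [expand]
  rw [integral_finsetSum _ fun σ _ => integrable_finsetSum _ fun τ _ => hint σ τ]
  simp_rw [integral_finsetSum _ fun τ _ => hint _ τ, integral_const_mul]
  rw [← sum_perm_sign_mul_sign_mul_prod_eq_factorial_mul_det]
  refine sum_congr rfl fun σ _ => sum_congr rfl fun τ _ => ?_
  rw [integral_fintype_prod_eq_prod (fun i a => f (σ i) a * g (τ i) a)]
  rfl

theorem Matrix.det_of_eval_eq_prod_leadingCoeff_mul_prod_sub {R : Type*} [CommRing R] {n : ℕ}
    (p : Fin n → R[X]) (hdeg : ∀ j, (p j).natDegree = j) (v : Fin n → R) :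
    det (of fun j k => (p j).eval (v k))
      = (∏ j, (p j).leadingCoeff) * ∏ i, ∏ j ∈ Ioi i, (v j - v i) := by
  have hcoeff : det (of fun i j : Fin n => (p j).coeff i) = ∏ j, (p j).leadingCoeff := by
    rw [det_of_isUpperTriangular]
    · refine prod_congr rfl fun j _ => ?_
      rw [of_apply, ← hdeg j, coeff_natDegree]
    · intro i j hij
      exact coeff_eq_zero_of_natDegree_lt (by rw [hdeg]; exact_mod_cast hij)
  rw [← det_transpose]
  change det (of fun i j => (p j).eval (v i)) = _
  rw [eval_matrixOfPolynomials_eq_vandermonde_mul_matrixOfPolynomials v p (fun j => (hdeg j).le),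
    det_mul, det_vandermonde, hcoeff, mul_comm]

theorem Finset.prod_filter_lt_eq_prod_prod_Ioi {M : Type*} [CommMonoid M] {n : ℕ}
    (f : Fin n → Fin n → M) :
    ∏ p ∈ univ.filter (fun p : Fin n × Fin n => p.1 < p.2), f p.1 p.2
      = ∏ i, ∏ j ∈ Ioi i, f i j := by
  rw [prod_sigma']
  exact prod_nbij' (fun p => ⟨p.1, p.2⟩) (fun p => (p.1, p.2)) (by simp) (by simp) (by simp)
    (by simp) (by simp)

theorem integrable_eval_mul_of_integrable_pow_mul {μ : Measure ℝ} {w : ℝ → ℂ}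
    (hw : AEStronglyMeasurable w μ) (hmom : ∀ m : ℕ, Integrable (fun x => |x| ^ m * ‖w x‖) μ)
    (r : ℂ[X]) : Integrable (fun x : ℝ => r.eval (x : ℂ) * w x) μ := by
  have monomial (i : ℕ) : Integrable (fun x : ℝ => (x : ℂ) ^ i * w x) μ := by
    refine (hmom i).mono' ((Complex.continuous_ofReal.pow i).aestronglyMeasurable.mul hw) ?_
    filter_upwards with x
    simp [Complex.norm_real]
  simp_rw [eval_eq_sum_range, sum_mul, mul_assoc]
  exact integrable_finsetSum _ fun i _ => (monomial i).const_mul _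

theorem prod_sub_sq_mul_prod_eq_det_mul_det {K : Type*} [Field K] {n : ℕ} (p : Fin n → K[X])
    (hdeg : ∀ j, (p j).natDegree = j) (hlead : ∀ j, (p j).leadingCoeff ≠ 0) (v u : Fin n → K) :
    (∏ i, ∏ j ∈ Ioi i, (v j - v i) ^ 2) * ∏ k, u k
      = (∏ j, ((p j).leadingCoeff ^ 2)⁻¹)
        * (det (of fun j k => (p j).eval (v k)) * det (of fun j k => u k * (p j).eval (v k))) := by
  have hc : ∏ j, (p j).leadingCoeff ≠ 0 := prod_ne_zero_iff.mpr fun j _ => hlead j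
  rw [show det (of fun j k => u k * (p j).eval (v k))
      = (∏ k, u k) * det (of fun j k => (p j).eval (v k)) from det_mul_row _ _,
    det_of_eval_eq_prod_leadingCoeff_mul_prod_sub p hdeg, prod_inv_distrib, prod_pow]
  simp_rw [prod_pow]
  field_simp

theorem generating_functional_factorization_general (n : ℕ)
    (w : ℝ → ℂ) (hw : Measurable w)
    (hmom : ∀ m : ℕ, Integrable (fun x : ℝ => |x| ^ m * ‖w x‖))
    (φ : ℝ → ℂ) (hφm : Measurable φ) (hφb : ∃ C : ℝ, ∀ x : ℝ, ‖φ x‖ ≤ C)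
    (P : Fin n → Polynomial ℂ)
    (hdeg : ∀ j : Fin n, (P j).natDegree = (j : ℕ))
    (hlead : ∀ j : Fin n, (P j).leadingCoeff ≠ 0)
    (horth : ∀ j k : Fin n,
      (∫ x : ℝ, (P j).eval (x : ℂ) * (P k).eval (x : ℂ) * w x)
        = if j = k then 1 else 0) :
    (∫ x : Fin n → ℝ,
        ((∏ p ∈ Finset.univ.filter (fun p : Fin n × Fin n => p.1 < p.2),
            (x p.2 - x p.1) ^ 2 : ℝ) : ℂ)
          * ∏ m : Fin n, ((1 - φ (x m)) * w (x m)))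
      = (n.factorial : ℂ) * (∏ j : Fin n, ((P j).leadingCoeff ^ 2)⁻¹)
        * Matrix.det (Matrix.of fun j k : Fin n =>
            (if j = k then (1 : ℂ) else 0)
              - ∫ x : ℝ, φ x * (P j).eval (x : ℂ) * (P k).eval (x : ℂ) * w x) := by
  obtain ⟨C, hC⟩ := hφb
  have hPw (j k : Fin n) : Integrable (fun x : ℝ => (P j * P k).eval (x : ℂ) * w x) :=
    integrable_eval_mul_of_integrable_pow_mul hw.aestronglyMeasurable hmom _
  have hφPw (j k : Fin n) :
      Integrable (fun x : ℝ => φ x * ((P j * P k).eval (x : ℂ) * w x)) :=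
    (hPw j k).bdd_mul hφm.aestronglyMeasurable (.of_forall hC)
  have split (j k : Fin n) (x : ℝ) :
      (P j).eval (x : ℂ) * ((1 - φ x) * w x * (P k).eval (x : ℂ))
        = (P j * P k).eval (x : ℂ) * w x - φ x * ((P j * P k).eval (x : ℂ) * w x) := by
    rw [eval_mul]
    ring
  have hentry (j k : Fin n) :
      ∫ x : ℝ, (P j).eval (x : ℂ) * ((1 - φ x) * w x * (P k).eval (x : ℂ))
        = (if j = k then 1 else 0)
          - ∫ x : ℝ, φ x * (P j).eval (x : ℂ) * (P k).eval (x : ℂ) * w x := by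
    simp_rw [split, integral_sub (hPw j k) (hφPw j k), eval_mul, ← mul_assoc, horth]
  have hintegrable (j k : Fin n) :
      Integrable (fun x : ℝ => (P j).eval (x : ℂ) * ((1 - φ x) * w x * (P k).eval (x : ℂ))) :=
    ((hPw j k).sub (hφPw j k)).congr (.of_forall fun x => (split j k x).symm)
  have hintegrand (x : Fin n → ℝ) :
      ((∏ p ∈ univ.filter (fun p : Fin n × Fin n => p.1 < p.2), (x p.2 - x p.1) ^ 2 : ℝ) : ℂ)
          * ∏ m, ((1 - φ (x m)) * w (x m))
        = (∏ j, ((P j).leadingCoeff ^ 2)⁻¹) * (det (of fun j k => (P j).eval (x k : ℂ))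
          * det (of fun j k => ((1 - φ (x k)) * w (x k)) * (P j).eval (x k : ℂ))) := by
    push_cast
    rw [prod_filter_lt_eq_prod_prod_Ioi fun i j => ((x j : ℂ) - x i) ^ 2]
    exact prod_sub_sq_mul_prod_eq_det_mul_det P hdeg hlead _ _
  rw [integral_congr_ae (.of_forall hintegrand), integral_const_mul, volume_pi,
    integral_det_mul_det _ _ hintegrable]
  simp_rw [hentry, Fintype.card_fin]
  ring

/-- Orthogonal-polynomial factorization of the generating-functional integral
(Heine/Andréief): for a weight `w` with all moments finite and orthonormal
polynomials `π₀, …, π_{n-1}` (with `deg π_j = j` and nonzero leading coefficients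
`ς_j`), and a bounded measurable test function `φ`,
`∫_{ℝⁿ} ∏_{j<k}(x_k - x_j)² ∏_m (1 - φ(x_m)) w(x_m) dx
  = n! ∏_j ς_j⁻² · det[δ_{jk} - ∫ φ π_{j-1} π_{k-1} w]`. -/
theorem generating_functional_factorization (n : ℕ) (hn : 1 ≤ n)
    (w : ℝ → ℂ) (hw : Measurable w)
    (hmom : ∀ m : ℕ, Integrable (fun x : ℝ => |x| ^ m * ‖w x‖))
    (φ : ℝ → ℂ) (hφm : Measurable φ) (hφb : ∃ C : ℝ, ∀ x : ℝ, ‖φ x‖ ≤ C)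
    (P : Fin n → Polynomial ℂ)
    (hdeg : ∀ j : Fin n, (P j).natDegree = (j : ℕ))
    (hlead : ∀ j : Fin n, (P j).leadingCoeff ≠ 0)
    (horth : ∀ j k : Fin n,
      (∫ x : ℝ, (P j).eval (x : ℂ) * (P k).eval (x : ℂ) * w x)
        = if j = k then 1 else 0) :
    (∫ x : Fin n → ℝ,
        ((∏ p ∈ Finset.univ.filter (fun p : Fin n × Fin n => p.1 < p.2),
            (x p.2 - x p.1) ^ 2 : ℝ) : ℂ)
          * ∏ m : Fin n, ((1 - φ (x m)) * w (x m)))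
      = (n.factorial : ℂ) * (∏ j : Fin n, ((P j).leadingCoeff ^ 2)⁻¹)
        * Matrix.det (Matrix.of fun j k : Fin n =>
            (if j = k then (1 : ℂ) else 0)
              - ∫ x : ℝ, φ x * (P j).eval (x : ℂ) * (P k).eval (x : ℂ) * w x) :=
  generating_functional_factorization_general n w hw hmom φ hφm hφb P hdeg hlead horth
end

section
/- Let h be real analytic and strictly positive on a neighbourhood of [√2, √2 + δ₀] for some δ₀ > 0, and for z ∈ (√2, √2 + δ₀) define F(z) := ( (3π/2) ∫_{√2}^{z} h(w)·√(w² − 2) dw )^{2/3} (a real 2/3 power of a positive number). Then there exist ε > 0 and a holomorphic function G on the complex disk { ζ : |ζ − √2| < ε } such that: G(z) = F(z) for all real z ∈ (√2, √2 + ε); G(√2) = 0; G′(√2) = √2·(π·h(√2))^{2/3}, in particular G′(√2) ≠ 0 so G is conformal at √2; and G″(√2) = 2·√2·(π·h(√2))^{2/3}·(2/5)·( h′(√2)/h(√2) + 1/(4√2) ). -/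
/-!
Write `c = √2` and `K = 3π/2`. On `[c, ∞)` the integrand factors as
`h(w) √(w² - c²) = √(w - c) · A(w)` with `A(w) = h(w) √(w + c)`, and `A` is holomorphic near `c`
once `h` is complexified through its power series. The substitution `w = c + s t` gives
`∫_c^{c+t} h(w) √(w² - c²) dw = t^{3/2} B(t)` with `B(ζ) = ∫₀¹ √s A(c + s ζ) ds`, which is
holomorphic in `ζ`, with `B(0) = (2/3) A(c) > 0` and `B'(0) = (2/5) A'(c)`. Hence
`F(z) = (z - c) (K B(z - c))^{2/3}`, where the principal power is holomorphic near `c`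
because `B` stays near the positive axis; writing `G(z) = (z - c) C(z - c)` one reads off
`G'(c) = C(0)` and `G''(c) = 2 C'(0)`.
-/

open MeasureTheory Set Metric Topology

open scoped ENNReal

theorem AnalyticAt.exists_complex_extension {f : ℝ → ℝ} {x₀ : ℝ} (hf : AnalyticAt ℝ f x₀) :
    ∃ r > 0, ∃ F : ℂ → ℂ, DifferentiableOn ℂ F (ball (x₀ : ℂ) r) ∧
      (∀ x : ℝ, |x - x₀| < r → F x = f x) ∧ deriv F x₀ = deriv f x₀ := by
  obtain ⟨p, r₀, hp⟩ := hf
  obtain ⟨r, hr0, hrp⟩ := ENNReal.lt_iff_exists_nnreal_btwn.mp hp.r_pos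
  have hpr : HasFPowerSeriesOnBall f p x₀ r := hp.mono (by exact_mod_cast hr0) hrp.le
  let q : FormalMultilinearSeries ℂ ℂ ℂ := .ofScalars ℂ fun n ↦ (p.coeff n : ℂ)
  have hq_radius : (r : ℝ≥0∞) ≤ q.radius := by
    obtain ⟨C, -, hC⟩ := p.norm_mul_pow_le_of_lt_radius (hrp.trans_le hp.r_le)
    refine q.le_radius_of_bound C fun n ↦ ?_
    simpa [q, FormalMultilinearSeries.ofScalars_norm, p.norm_apply_eq_norm_coef] using hC n
  have hqr : HasFPowerSeriesOnBall (fun z ↦ q.sum (z - x₀)) q (x₀ : ℂ) r := by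
    refine ⟨hq_radius, by exact_mod_cast hr0, fun {y} hy ↦ ?_⟩
    simpa using (q.hasFPowerSeriesOnBall ((by exact_mod_cast hr0 : (0 : ℝ≥0∞) < r).trans_le
      hq_radius)).hasSum (lt_of_lt_of_le hy hq_radius)
  refine ⟨r, by exact_mod_cast hr0, fun z ↦ q.sum (z - x₀), ?_, fun x hx ↦ ?_, ?_⟩
  · simpa [eball_coe] using hqr.differentiableOn
  · have hxr : x - x₀ ∈ eball (0 : ℝ) r := by
      simpa [edist_dist, Real.dist_eq] using hx
    have hxc : ((x - x₀ : ℝ) : ℂ) ∈ eball (0 : ℂ) r := by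
      simpa [edist_dist, Complex.dist_eq, Complex.norm_real, ← Complex.ofReal_sub] using hx
    have hterm : ∀ n, q n (fun _ ↦ ((x - x₀ : ℝ) : ℂ)) = p n (fun _ ↦ x - x₀) := fun n ↦ by
      simp [q, FormalMultilinearSeries.coeff_ofScalars]
    have hsum := (hpr.hasSum hxr).mapL Complex.ofRealCLM
    simp only [Complex.ofRealCLM_apply, ← hterm, add_sub_cancel] at hsum
    simpa using (hqr.hasSum hxc).unique hsum
  · rw [hqr.hasFPowerSeriesAt.deriv, hpr.hasFPowerSeriesAt.deriv]
    simp [q]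

theorem add_mul_mem_closedBall_of_mem_Icc {c x : ℂ} {R s : ℝ} (hx : ‖x‖ ≤ R)
    (hs : s ∈ Icc (0 : ℝ) 1) :
    c + s * x ∈ closedBall c R := by
  rw [mem_closedBall, dist_eq_norm, add_sub_cancel_left, norm_mul, Complex.norm_real,
    Real.norm_of_nonneg hs.1]
  exact (mul_le_of_le_one_left (norm_nonneg x) hs.2).trans hx

theorem ContinuousOn.comp_add_mul_of_mem_Icc {A : ℂ → ℂ} {c x : ℂ} {R : ℝ}
    (hA : ContinuousOn A (closedBall c R)) (hx : ‖x‖ ≤ R) :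
    ContinuousOn (fun s : ℝ ↦ A (c + s * x)) (Icc 0 1) :=
  hA.comp (by fun_prop) fun _ hs ↦ add_mul_mem_closedBall_of_mem_Icc hx hs

theorem hasDerivAt_integral_mul_comp_add_mul {w : ℝ → ℂ} (hw : Continuous w) {A : ℂ → ℂ}
    {c : ℂ} {ρ : ℝ} (hA : DifferentiableOn ℂ A (ball c ρ)) {ζ : ℂ} (hζ : ‖ζ‖ < ρ) :
    HasDerivAt (fun ξ : ℂ ↦ ∫ s in (0 : ℝ)..1, w s * A (c + s * ξ))
      (∫ s in (0 : ℝ)..1, w s * (s * deriv A (c + s * ζ))) ζ := by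
  obtain ⟨R, hζR, hRρ'⟩ := exists_between hζ
  have hRρ : closedBall c R ⊆ ball c ρ := closedBall_subset_ball hRρ'
  have hAc : ContinuousOn A (closedBall c R) := hA.continuousOn.mono hRρ
  have hA' : ContinuousOn (deriv A) (closedBall c R) :=
    ((hA.analyticOnNhd isOpen_ball).deriv.continuousOn).mono hRρ
  obtain ⟨M, hM⟩ := (isCompact_closedBall c R).exists_bound_of_continuousOn hA'
  have hnhds : ball ζ (R - ‖ζ‖) ∈ 𝓝 ζ := ball_mem_nhds ζ (by linarith)
  have hnorm : ∀ ξ ∈ ball ζ (R - ‖ζ‖), ‖ξ‖ ≤ R := fun ξ hξ ↦ by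
    have := norm_le_norm_add_norm_sub' ξ ζ
    rw [mem_ball, dist_eq_norm] at hξ
    linarith
  have hIoc : uIoc (0 : ℝ) 1 ⊆ Icc 0 1 := by
    rw [uIoc_of_le zero_le_one]; exact Ioc_subset_Icc_self
  refine (intervalIntegral.hasDerivAt_integral_of_dominated_loc_of_deriv_le
    (F := fun ξ s ↦ w s * A (c + s * ξ)) (F' := fun ξ s ↦ w s * (s * deriv A (c + s * ξ)))
    (bound := fun s ↦ ‖w s‖ * M) hnhds ?_ ?_ ?_ ?_ ?_ ?_).2
  · filter_upwards [hnhds] with ξ hξ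
    exact ((hw.continuousOn.mul (hAc.comp_add_mul_of_mem_Icc (hnorm ξ hξ))).mono
      hIoc).aestronglyMeasurable measurableSet_uIoc
  · exact (hw.continuousOn.mul (hAc.comp_add_mul_of_mem_Icc hζR.le)).intervalIntegrable_of_Icc
      zero_le_one
  · exact ((hw.continuousOn.mul (Complex.continuous_ofReal.continuousOn.mul
      (hA'.comp_add_mul_of_mem_Icc hζR.le))).mono hIoc).aestronglyMeasurable
      measurableSet_uIoc
  · refine ae_of_all _ fun s hs ξ hξ ↦ ?_
    have hs' := hIoc hs
    rw [norm_mul, norm_mul, Complex.norm_real, Real.norm_of_nonneg hs'.1]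
    gcongr
    exact (mul_le_of_le_one_left (norm_nonneg _) hs'.2).trans
      (hM _ (add_mul_mem_closedBall_of_mem_Icc (hnorm ξ hξ) hs'))
  · exact (hw.norm.mul continuous_const).intervalIntegrable 0 1
  · refine ae_of_all _ fun s hs ξ hξ ↦ ?_
    have hmem := hRρ (add_mul_mem_closedBall_of_mem_Icc (c := c) (hnorm ξ hξ) (hIoc hs))
    have hAd := (hA.differentiableAt (isOpen_ball.mem_nhds hmem)).hasDerivAt
    have haff : HasDerivAt (fun ξ : ℂ ↦ c + s * ξ) s ξ :=
      ((hasDerivAt_id ξ).const_mul (s : ℂ)).const_add c |>.congr_deriv (mul_one _)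
    exact ((hAd.comp ξ haff).const_mul (w s)).congr_deriv (by ring)

section ShiftedProduct

variable {𝕜 : Type*} [NontriviallyNormedField 𝕜] {C : 𝕜 → 𝕜}

theorem deriv_sub_mul_comp_sub (hC : DifferentiableAt 𝕜 C 0) (c : 𝕜) :
    deriv (fun z ↦ (z - c) * C (z - c)) c = C 0 := by
  rw [deriv_comp_sub_const (fun z ↦ z * C z), sub_self,
    deriv_fun_mul differentiableAt_fun_id hC]
  simp

theorem deriv_deriv_sub_mul_comp_sub [CompleteSpace 𝕜] (hC : AnalyticAt 𝕜 C 0) (c : 𝕜) :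
    deriv (deriv fun z ↦ (z - c) * C (z - c)) c = 2 * deriv C 0 := by
  have hderiv : deriv (fun z ↦ z * C z) =ᶠ[𝓝 0] fun z ↦ C z + z * deriv C z := by
    filter_upwards [hC.eventually_analyticAt] with z hz
    simp [deriv_fun_mul differentiableAt_fun_id hz.differentiableAt]
  rw [funext (deriv_comp_sub_const (fun z ↦ z * C z) c), deriv_comp_sub_const, sub_self,
    hderiv.deriv_eq, deriv_fun_add hC.differentiableAt
    (differentiableAt_fun_id.fun_mul hC.deriv.differentiableAt),
    deriv_fun_mul differentiableAt_fun_id hC.deriv.differentiableAt]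
  simp only [deriv_id'', one_mul, zero_mul, add_zero]
  ring

end ShiftedProduct

theorem ofReal_rpow_eq_mul_cpow {p t a : ℝ} {β : ℂ} (hp : p ≠ 0) (ht : 0 < t) (hβ : 0 < β.re)
    (ha : (a : ℂ) = ((t ^ p⁻¹ : ℝ) : ℂ) * β) :
    ((a ^ p : ℝ) : ℂ) = t * β ^ (p : ℂ) := by
  have htp : 0 < t ^ p⁻¹ := Real.rpow_pos_of_pos ht _
  have hβa : β = ((a / t ^ p⁻¹ : ℝ) : ℂ) := by
    rw [Complex.ofReal_div, ha, mul_div_cancel_left₀ _ (by exact_mod_cast htp.ne')]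
  have hpos : 0 < a / t ^ p⁻¹ := by simpa [hβa] using hβ
  calc ((a ^ p : ℝ) : ℂ) = (((t ^ p⁻¹ * (a / t ^ p⁻¹)) ^ p : ℝ) : ℂ) := by
        rw [mul_div_cancel₀ _ htp.ne']
    _ = t * β ^ (p : ℂ) := by
        rw [Real.mul_rpow htp.le hpos.le, Real.rpow_inv_rpow ht.le hp, Complex.ofReal_mul,
          Complex.ofReal_cpow hpos.le, hβa]

theorem exists_differentiableOn_extension_rpow {p c ρ b : ℝ} (hp : p ≠ 0) (hρ : 0 < ρ)
    (hb : 0 < b) {φ : ℝ → ℝ} {B : ℂ → ℂ} (hB : DifferentiableOn ℂ B (ball 0 ρ)) (hB0 : B 0 = b)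
    (hφ : ∀ t ∈ Ioo 0 ρ, (φ (c + t) : ℂ) = ((t ^ p⁻¹ : ℝ) : ℂ) * B t) :
    ∃ ε > 0, ∃ G : ℂ → ℂ, DifferentiableOn ℂ G (ball (c : ℂ) ε) ∧
      (∀ z ∈ Ioo c (c + ε), G z = ((φ z ^ p : ℝ) : ℂ)) ∧ G c = 0 ∧
      deriv G c = ((b ^ p : ℝ) : ℂ) ∧
      deriv (deriv G) c = 2 * p * ((b ^ p : ℝ) : ℂ) * deriv B 0 / b := by
  have hB0' : HasDerivAt B (deriv B 0) 0 :=
    (hB.differentiableAt (ball_mem_nhds 0 hρ)).hasDerivAt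
  obtain ⟨ε₁, hε₁, hre⟩ := eventually_nhds_iff_ball.mp <|
    (Complex.continuous_re.continuousAt.comp hB0'.continuousAt).eventually
      (eventually_gt_nhds (by simpa [hB0] using hb))
  set ε := min ε₁ ρ
  have hεpos : 0 < ε := lt_min hε₁ hρ
  have hεB : ball (0 : ℂ) ε ⊆ ball 0 ρ := ball_subset_ball (min_le_right _ _)
  have hpos : ∀ ζ ∈ ball (0 : ℂ) ε, 0 < (B ζ).re := fun ζ hζ ↦
    hre ζ (ball_subset_ball (min_le_left _ _) hζ)
  set C : ℂ → ℂ := fun ζ ↦ B ζ ^ (p : ℂ)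
  have hC : DifferentiableOn ℂ C (ball 0 ε) := fun ζ hζ ↦
    (((hB.differentiableAt (isOpen_ball.mem_nhds (hεB hζ))).hasDerivAt.cpow_const
      (Complex.mem_slitPlane_iff.2 (.inl (hpos ζ hζ)))).differentiableAt).differentiableWithinAt
  have hC0 : AnalyticAt ℂ C 0 := hC.analyticOnNhd isOpen_ball 0 (mem_ball_self hεpos)
  have hCb : C 0 = ((b ^ p : ℝ) : ℂ) := by simp [C, hB0, Complex.ofReal_cpow hb.le]
  have hdC : deriv C 0 = p * ((b ^ p : ℝ) : ℂ) / b * deriv B 0 := by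
    rw [(hB0'.cpow_const (c := (p : ℂ)) (by simpa [hB0] using hb)).deriv, hB0,
      Complex.cpow_sub _ _ (by exact_mod_cast hb.ne'), Complex.cpow_one,
      Complex.ofReal_cpow hb.le]
    ring
  refine ⟨ε, hεpos, fun z ↦ (z - c) * C (z - c), ?_, fun z hz ↦ ?_, by simp,
    by rw [deriv_sub_mul_comp_sub hC0.differentiableAt, hCb],
    by rw [deriv_deriv_sub_mul_comp_sub hC0, hdC]; ring⟩
  · refine (differentiableOn_id.mul hC).comp (differentiableOn_id.sub_const _) fun z hz ↦ ?_
    simpa [dist_eq_norm] using hz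
  · obtain ⟨t, rfl⟩ : ∃ t, z = c + t := ⟨z - c, by ring⟩
    have ht : t ∈ Ioo 0 ρ := ⟨by linarith [hz.1], by linarith [hz.2, min_le_right ε₁ ρ]⟩
    have htε : (t : ℂ) ∈ ball 0 ε := by
      simpa [abs_of_pos ht.1] using sub_lt_iff_lt_add'.2 hz.2
    rw [ofReal_rpow_eq_mul_cpow hp ht.1 (hpos t htε) (hφ t ht)]
    simp [C]

theorem mul_sqrt_eq_rpow_three_halves {t : ℝ} (ht : 0 ≤ t) : t * √t = t ^ (3 / 2 : ℝ) := by
  rw [Real.sqrt_eq_rpow, ← Real.rpow_one_add' ht (by norm_num)]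
  norm_num

theorem integral_sqrt_sub_mul (f : ℝ → ℝ) (c : ℝ) {t : ℝ} (ht : 0 < t) :
    ∫ w in c..c + t, √(w - c) * f w = t ^ (3 / 2 : ℝ) * ∫ s in (0 : ℝ)..1, √s * f (c + s * t) := by
  have hsub := intervalIntegral.integral_comp_mul_add (fun w ↦ √(w - c) * f w) (a := 0) (b := 1)
    ht.ne' c
  simp only [mul_zero, zero_add, mul_one, add_sub_cancel_right, smul_eq_mul] at hsub
  calc ∫ w in c..c + t, √(w - c) * f w
      = t * ∫ s in (0 : ℝ)..1, √(t * s) * f (t * s + c) := by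
        rw [hsub, add_comm, mul_inv_cancel_left₀ ht.ne']
    _ = t ^ (3 / 2 : ℝ) * ∫ s in (0 : ℝ)..1, √s * f (c + s * t) := by
        simp_rw [Real.sqrt_mul ht.le, mul_assoc, intervalIntegral.integral_const_mul, ← mul_assoc,
          mul_sqrt_eq_rpow_three_halves ht.le, add_comm _ c, mul_comm t]

theorem integral_zero_one_sqrt : ∫ s in (0 : ℝ)..1, √s = 2 / 3 := by
  simp_rw [Real.sqrt_eq_rpow]
  norm_num [integral_rpow]

theorem integral_zero_one_sqrt_mul_self : ∫ s in (0 : ℝ)..1, √s * s = 2 / 5 := by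
  have h32 : ∀ s ∈ uIcc (0 : ℝ) 1, √s * s = s ^ (3 / 2 : ℝ) := fun s hs ↦ by
    rw [uIcc_of_le zero_le_one] at hs
    rw [mul_comm, mul_sqrt_eq_rpow_three_halves hs.1]
  rw [intervalIntegral.integral_congr h32]
  norm_num [integral_rpow]

/- On `[c, ∞)`, `h w * √(w ^ 2 - c ^ 2) = √(w - c) * edgeFactor H c w` when `H` extends `h`;
`edgeAverage H c t` is what remains of `∫ w in c..c + t, √(w - c) * edgeFactor H c w` after
substituting `w = c + s t` and extracting `t ^ (3 / 2)`. -/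
noncomputable def edgeFactor (H : ℂ → ℂ) (c : ℝ) (z : ℂ) : ℂ := H z * (z + c) ^ (1 / 2 : ℂ)

noncomputable def edgeAverage (H : ℂ → ℂ) (c : ℝ) (ζ : ℂ) : ℂ :=
  ∫ s in (0 : ℝ)..1, (√s : ℂ) * edgeFactor H c (c + s * ζ)

section EdgeFactor

variable {H : ℂ → ℂ} {c r : ℝ}

theorem add_mem_slitPlane_of_mem_ball {z : ℂ} (hz : z ∈ ball (c : ℂ) c) :
    z + c ∈ Complex.slitPlane := by
  refine Complex.mem_slitPlane_iff.2 (.inl ?_)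
  have hre := (Complex.abs_re_le_norm (z - c)).trans_lt (mem_ball_iff_norm.1 hz)
  simp only [Complex.sub_re, Complex.ofReal_re] at hre
  simp only [Complex.add_re, Complex.ofReal_re]
  linarith [(abs_lt.1 hre).1, (abs_nonneg (z.re - c)).trans_lt hre]

theorem differentiableOn_edgeFactor (hH : DifferentiableOn ℂ H (ball c r)) :
    DifferentiableOn ℂ (edgeFactor H c) (ball c (min r c)) := by
  refine (hH.mono (ball_subset_ball (min_le_left _ _))).mul fun z hz ↦ ?_
  exact (((hasDerivAt_id z).add_const (c : ℂ)).cpow_const (add_mem_slitPlane_of_mem_ball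
    (ball_subset_ball (min_le_right _ _) hz))).differentiableAt.differentiableWithinAt

theorem edgeFactor_ofReal {x : ℝ} (hx : 0 < x + c) : edgeFactor H c x = H x * √(x + c) := by
  rw [edgeFactor, Real.sqrt_eq_rpow, Complex.ofReal_cpow hx.le]
  push_cast
  rfl

theorem hasDerivAt_edgeFactor {H' : ℂ} (hc : 0 < c) (hH : HasDerivAt H H' c) :
    HasDerivAt (edgeFactor H c) (√(2 * c) * (H' + H c / (4 * c))) c := by
  have h2c : ((c : ℂ) + c) = ((2 * c : ℝ) : ℂ) := by push_cast; ring
  have hroot : ((2 * c : ℝ) : ℂ) ^ (1 / 2 : ℂ) = √(2 * c) := by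
    rw [Real.sqrt_eq_rpow, Complex.ofReal_cpow (by positivity)]
    norm_num
  have hsqrt := ((hasDerivAt_id (c : ℂ)).add_const (c : ℂ)).cpow_const (c := 1 / 2)
    (by rw [id, h2c]; exact Complex.ofReal_mem_slitPlane.2 (by positivity))
  refine (hH.mul hsqrt).congr_deriv ?_
  simp only [id, h2c, mul_one]
  rw [Complex.cpow_sub _ _ (by exact_mod_cast (by positivity : 2 * c ≠ 0)), Complex.cpow_one,
    hroot]
  push_cast
  field_simp
  ring

theorem hasDerivAt_edgeAverage (hH : DifferentiableOn ℂ H (ball c r)) {ζ : ℂ}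
    (hζ : ‖ζ‖ < min r c) :
    HasDerivAt (edgeAverage H c)
      (∫ s in (0 : ℝ)..1, (√s : ℂ) * (s * deriv (edgeFactor H c) (c + s * ζ))) ζ :=
  hasDerivAt_integral_mul_comp_add_mul (by fun_prop) (differentiableOn_edgeFactor hH) hζ

theorem differentiableOn_edgeAverage (hH : DifferentiableOn ℂ H (ball c r)) :
    DifferentiableOn ℂ (edgeAverage H c) (ball 0 (min r c)) := fun _ hζ ↦
  (hasDerivAt_edgeAverage hH (mem_ball_zero_iff.1 hζ)).differentiableAt.differentiableWithinAt

theorem edgeAverage_zero : edgeAverage H c 0 = 2 / 3 * edgeFactor H c c := by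
  simp only [edgeAverage, mul_zero, add_zero, intervalIntegral.integral_mul_const,
    intervalIntegral.integral_ofReal, integral_zero_one_sqrt]
  push_cast
  ring

theorem deriv_edgeAverage_zero (hH : DifferentiableOn ℂ H (ball c r)) (hρ : 0 < min r c) :
    deriv (edgeAverage H c) 0 = 2 / 5 * deriv (edgeFactor H c) c := by
  rw [(hasDerivAt_edgeAverage hH (by simpa using hρ)).deriv]
  simp only [mul_zero, add_zero, ← mul_assoc, intervalIntegral.integral_mul_const]
  norm_cast
  rw [intervalIntegral.integral_ofReal, integral_zero_one_sqrt_mul_self]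
  push_cast
  ring

theorem ofReal_integral_mul_sqrt_sq_sub_sq_eq_edgeAverage {h : ℝ → ℝ}
    (hHh : ∀ x : ℝ, |x - c| < r → H x = h x) {t : ℝ} (ht : t ∈ Ioo 0 (min r c)) :
    ((∫ w in c..c + t, h w * √(w ^ 2 - c ^ 2) : ℝ) : ℂ) =
      ((t ^ (3 / 2 : ℝ) : ℝ) : ℂ) * edgeAverage H c t := by
  have htr : t < r := ht.2.trans_le (min_le_left _ _)
  have htc : t < c := ht.2.trans_le (min_le_right _ _)
  have hfac : ∀ w ∈ uIcc c (c + t), h w * √(w ^ 2 - c ^ 2) = √(w - c) * (h w * √(w + c)) := by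
    intro w hw
    rw [uIcc_of_le (by linarith [ht.1])] at hw
    rw [show w ^ 2 - c ^ 2 = (w - c) * (w + c) by ring, Real.sqrt_mul (by linarith [hw.1])]
    ring
  rw [intervalIntegral.integral_congr hfac, integral_sqrt_sub_mul _ _ ht.1, Complex.ofReal_mul,
    edgeAverage, ← intervalIntegral.integral_ofReal]
  congr 1
  refine intervalIntegral.integral_congr fun s hs ↦ ?_
  rw [uIcc_of_le zero_le_one] at hs
  have hst : s * t ≤ t := mul_le_of_le_one_left ht.1.le hs.2
  have hst0 : 0 ≤ s * t := mul_nonneg hs.1 ht.1.le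
  rw [show (c : ℂ) + s * t = ((c + s * t : ℝ) : ℂ) by push_cast; ring,
    edgeFactor_ofReal (by linarith),
    hHh _ (by rw [add_sub_cancel_left, abs_of_nonneg hst0]; linarith)]
  push_cast
  ring

end EdgeFactor

theorem exists_conformal_edge_map {c K : ℝ} (hc : 0 < c) (hK : 0 < K) {h : ℝ → ℝ}
    (hh : AnalyticAt ℝ h c) (hpos : 0 < h c) :
    ∃ ε > (0 : ℝ), ∃ G : ℂ → ℂ, DifferentiableOn ℂ G (ball (c : ℂ) ε) ∧
      (∀ z ∈ Ioo c (c + ε),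
        G z = (((K * ∫ w in c..z, h w * √(w ^ 2 - c ^ 2)) ^ (2 / 3 : ℝ) : ℝ) : ℂ)) ∧
      G c = 0 ∧
      deriv G c = (((K * (2 / 3) * (h c * √(2 * c))) ^ (2 / 3 : ℝ) : ℝ) : ℂ) ∧
      deriv (deriv G) c = 2 * (2 / 5) * deriv G c * ((deriv h c / h c + 1 / (4 * c) : ℝ) : ℂ) := by
  obtain ⟨r, hr, H, hH, hHh, hH'⟩ := hh.exists_complex_extension
  have hρ : 0 < min r c := lt_min hr hc
  have hHc : H c = h c := hHh c (by simpa using hr)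
  have hB0 : K * edgeAverage H c 0 = ((K * (2 / 3) * (h c * √(2 * c)) : ℝ) : ℂ) := by
    rw [edgeAverage_zero, edgeFactor_ofReal (by linarith), hHc, ← two_mul]
    push_cast
    ring
  have hφ : ∀ t ∈ Ioo 0 (min r c), ((K * ∫ w in c..c + t, h w * √(w ^ 2 - c ^ 2) : ℝ) : ℂ) =
      ((t ^ (2 / 3 : ℝ)⁻¹ : ℝ) : ℂ) * (K * edgeAverage H c t) := fun t ht ↦ by
    rw [Complex.ofReal_mul, ofReal_integral_mul_sqrt_sq_sub_sq_eq_edgeAverage hHh ht]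
    norm_num
    ring
  obtain ⟨ε, hε, G, hG, hGφ, hG0, hG', hG''⟩ :=
    exists_differentiableOn_extension_rpow (c := c)
      (φ := fun z ↦ K * ∫ w in c..z, h w * √(w ^ 2 - c ^ 2))
      (by norm_num : (2 / 3 : ℝ) ≠ 0) hρ (by positivity)
      ((differentiableOn_edgeAverage hH).const_mul _) hB0 hφ
  refine ⟨ε, hε, G, hG, hGφ, hG0, hG', ?_⟩
  rw [hG'', hG', deriv_const_mul _ ((differentiableOn_edgeAverage hH).differentiableAt
    (ball_mem_nhds 0 hρ)), deriv_edgeAverage_zero hH hρ, (hasDerivAt_edgeFactor hc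
    (hH.differentiableAt (ball_mem_nhds _ hr)).hasDerivAt).deriv, hH', hHc]
  have hK0 : (K : ℂ) ≠ 0 := by exact_mod_cast hK.ne'
  have hc0 : (c : ℂ) ≠ 0 := by exact_mod_cast hc.ne'
  have hhc : (h c : ℂ) ≠ 0 := by exact_mod_cast hpos.ne'
  have hsc : ((√(2 * c) : ℝ) : ℂ) ≠ 0 := by exact_mod_cast (Real.sqrt_pos.2 (by positivity)).ne'
  push_cast
  field_simp

theorem sqrt_two_mul_sqrt_two_rpow_two_thirds : √(2 * √2) ^ (2 / 3 : ℝ) = √2 := by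
  rw [Real.sqrt_eq_rpow 2, ← Real.rpow_one_add' zero_le_two (by norm_num), Real.sqrt_eq_rpow,
    ← Real.rpow_mul zero_le_two, ← Real.rpow_mul zero_le_two]
  norm_num

/-- The conformal map at the soft edge: if `h` is real analytic and strictly positive
on a neighbourhood of `[√2, √2 + δ₀]`, then the function
`F(z) = ((3π/2) ∫_{√2}^z h(w)√(w²-2) dw)^{2/3}` on `(√2, √2 + δ₀)` extends to a
holomorphic function `G` on a complex disk around `√2` with `G(√2) = 0`,
`G'(√2) = √2 (π h(√2))^{2/3} ≠ 0` (so `G` is conformal at `√2`), and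
`G''(√2) = 2√2 (π h(√2))^{2/3} (2/5) (h'(√2)/h(√2) + 1/(4√2))`. -/
theorem edge_conformal_map (δ₀ : ℝ) (hδ : 0 < δ₀) (h : ℝ → ℝ)
    (hreg : ∃ U : Set ℝ, IsOpen U ∧ Icc (Real.sqrt 2) (Real.sqrt 2 + δ₀) ⊆ U ∧
      AnalyticOnNhd ℝ h U ∧ ∀ x ∈ U, 0 < h x) :
    ∃ ε > (0 : ℝ), ∃ G : ℂ → ℂ,
      DifferentiableOn ℂ G (Metric.ball ((Real.sqrt 2 : ℝ) : ℂ) ε) ∧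
      (∀ z : ℝ, z ∈ Ioo (Real.sqrt 2) (Real.sqrt 2 + ε) →
        G (z : ℂ)
          = ((((3 * Real.pi / 2) *
                ∫ w in (Real.sqrt 2)..z, h w * Real.sqrt (w ^ 2 - 2)) ^ ((2 : ℝ) / 3)
              : ℝ) : ℂ)) ∧
      G ((Real.sqrt 2 : ℝ) : ℂ) = 0 ∧
      deriv G ((Real.sqrt 2 : ℝ) : ℂ)
        = ((Real.sqrt 2 * (Real.pi * h (Real.sqrt 2)) ^ ((2 : ℝ) / 3) : ℝ) : ℂ) ∧
      deriv G ((Real.sqrt 2 : ℝ) : ℂ) ≠ 0 ∧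
      deriv (deriv G) ((Real.sqrt 2 : ℝ) : ℂ)
        = ((2 * Real.sqrt 2 * (Real.pi * h (Real.sqrt 2)) ^ ((2 : ℝ) / 3) * (2 / 5)
            * (deriv h (Real.sqrt 2) / h (Real.sqrt 2) + 1 / (4 * Real.sqrt 2))
            : ℝ) : ℂ) := by
  obtain ⟨U, -, hIcc, han, hpos⟩ := hreg
  have hU : √2 ∈ U := hIcc (left_mem_Icc.2 (by linarith))
  have hh := hpos _ hU
  obtain ⟨ε, hε, G, hG, hGF, hG0, hG', hG''⟩ := exists_conformal_edge_map
    (Real.sqrt_pos.2 two_pos) (by positivity : 0 < 3 * Real.pi / 2) (han _ hU) hh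
  have hconst : (3 * Real.pi / 2 * (2 / 3) * (h √2 * √(2 * √2))) ^ (2 / 3 : ℝ) =
      √2 * (Real.pi * h √2) ^ (2 / 3 : ℝ) := by
    rw [show 3 * Real.pi / 2 * (2 / 3) * (h √2 * √(2 * √2)) = Real.pi * h √2 * √(2 * √2) by ring,
      Real.mul_rpow (by positivity) (by positivity), sqrt_two_mul_sqrt_two_rpow_two_thirds,
      mul_comm]
  rw [hconst] at hG'
  simp only [Real.sq_sqrt zero_le_two] at hGF
  refine ⟨ε, hε, G, hG, hGF, hG0, hG', ?_, ?_⟩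
  · rw [hG']
    exact_mod_cast (by positivity : 0 < √2 * (Real.pi * h √2) ^ (2 / 3 : ℝ)).ne'
  · rw [hG'', hG']
    push_cast
    ring
end
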